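/- arXiv:2603.10203 — 8 statements merged into one kernel-verified Lean document; each statement's English description precedes it below -/
import Mathlib

section
/- Let n be odd, let q = 2^n, and let a be a nonzero element of F_q. If x, y ∈ F_q satisfy x + y = a⁻¹ and Tr(a³x³ + a³y³) = 0, then we get a contradiction; equivalently, there are no x, y ∈ F_q with x + y = a⁻¹ and Tr(a³x³) = Tr(a³y³). -/
/-!
With `u = a x` and `v = a y` we have `u + v = 1`, so in characteristic 2
`u³ + v³ = 1 + uv = 1 + (u + u²)`. The Frobenius `t ↦ t²` is an automorphism over `𝔽₂`, so
`Tr (u + u²) = 2 Tr u = 0`, while `Tr 1 = [F : 𝔽₂] = n = 1` in `𝔽₂` since `n` is odd.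
-/

theorem Algebra.trace_pow_card {K L : Type*} [Field K] [Fintype K] [Field L] [Algebra K L]
    [Algebra.IsAlgebraic K L] (x : L) :
    Algebra.trace K L (x ^ Fintype.card K) = Algebra.trace K L x :=
  Algebra.trace_eq_of_algEquiv (FiniteField.frobeniusAlgEquivOfAlgebraic K L) x

theorem FiniteField.trace_add_sq_eq_zero {F : Type*} [Field F] [Finite F] [Algebra (ZMod 2) F]
    (t : F) : Algebra.trace (ZMod 2) F (t + t ^ 2) = 0 := by
  have h := Algebra.trace_pow_card (K := ZMod 2) t
  rw [ZMod.card] at h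
  rw [map_add, h, CharTwo.add_self_eq_zero]

theorem FiniteField.trace_one_of_card_eq_pow {p n : ℕ} [Fact p.Prime] {F : Type*} [Field F]
    [Fintype F] [Algebra (ZMod p) F] (hcard : Fintype.card F = p ^ n) :
    Algebra.trace (ZMod p) F 1 = n := by
  have hfin : Module.finrank (ZMod p) F = n := by
    rw [Module.card_eq_pow_finrank (K := ZMod p), ZMod.card] at hcard
    exact Nat.pow_right_injective (Fact.out : p.Prime).two_le hcard
  rw [← map_one (algebraMap (ZMod p) F), Algebra.trace_algebraMap, hfin, nsmul_one]

theorem CharTwo.pow_three_add_pow_three_of_add_eq_one {R : Type*} [CommRing R] [CharP R 2]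
    {u v : R} (h : u + v = 1) : u ^ 3 + v ^ 3 = 1 + (u + u ^ 2) := by
  obtain rfl : v = 1 + u := by rw [← h, add_comm u, add_assoc, CharTwo.add_self_eq_zero, add_zero]
  have h2 : (2 : R) = 0 := CharTwo.two_eq_zero
  linear_combination (u + u ^ 2 + u ^ 3) * h2

theorem stmt_0 {n : ℕ} (hn : Odd n) (F : Type*) [Field F] [Fintype F]
    [Algebra (ZMod 2) F] (hcard : Fintype.card F = 2 ^ n)
    (a : F) (ha : a ≠ 0) :
    ¬ ∃ x y : F, x + y = a⁻¹ ∧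
      Algebra.trace (ZMod 2) F (a ^ 3 * x ^ 3 + a ^ 3 * y ^ 3) = 0 := by
  rintro ⟨x, y, hxy, htr⟩
  have : CharP F 2 := charP_of_injective_algebraMap' (ZMod 2) 2
  have hsum : a * x + a * y = 1 := by rw [← mul_add, hxy, mul_inv_cancel₀ ha]
  rw [← mul_pow, ← mul_pow, CharTwo.pow_three_add_pow_three_of_add_eq_one hsum, map_add,
    FiniteField.trace_add_sq_eq_zero, FiniteField.trace_one_of_card_eq_pow hcard,
    hn.natCast_zmod_two] at htr
  exact one_ne_zero htr
end

section
/- Let n be odd, q = 2^n, and a ∈ F_q nonzero. Define f : F_q → F_q by f(x) = x + a⁻¹·Tr(a³x³), where Tr(a³x³) is viewed as an element 0 or 1 of F_q. Then for every b in the image of f, the fiber f⁻¹(b) has exactly 2 elements; in particular the image of f has size 2^(n-1). -/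
theorem stmt_1 {n : ℕ} (hn : Odd n) (F : Type*) [Field F] [Fintype F]
    [Algebra (ZMod 2) F] (hcard : Fintype.card F = 2 ^ n)
    (a : F) (ha : a ≠ 0)
    (f : F → F)
    (hf : ∀ x, f x = x + a⁻¹ * algebraMap (ZMod 2) F (Algebra.trace (ZMod 2) F (a ^ 3 * x ^ 3))) :
    (∀ b ∈ Set.range f, (f ⁻¹' {b}).ncard = 2) ∧ (Set.range f).ncard = 2 ^ (n - 1) := by
  classical
  haveI hchar : CharP F 2 := (Algebra.charP_iff (ZMod 2) F 2).mp inferInstance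
  have h2 : (2 : F) = 0 := CharTwo.two_eq_zero
  have hainv : a⁻¹ ≠ 0 := inv_ne_zero ha
  -- Frobenius as an algebra equivalence over ZMod 2
  have hsq : ∀ r : ZMod 2, r ^ 2 = r := by decide
  let e : F ≃ₐ[ZMod 2] F := AlgEquiv.ofRingEquiv (f := frobeniusEquiv F 2)
    (fun r => by
      have hr : r ^ 2 = r := hsq r
      show frobenius F 2 _ = _
      rw [frobenius_def, ← map_pow, hr])
  have trace_sq : ∀ y : F, Algebra.trace (ZMod 2) F (y ^ 2) = Algebra.trace (ZMod 2) F y := by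
    intro y
    have := Algebra.trace_eq_of_algEquiv e y
    simpa [e, AlgEquiv.ofRingEquiv, frobeniusEquiv_def, frobenius_def] using this
  -- finrank
  have hrank : Module.finrank (ZMod 2) F = n := by
    have := Module.card_eq_pow_finrank (K := ZMod 2) (V := F)
    rw [ZMod.card, hcard] at this
    exact (Nat.pow_right_injective le_rfl this.symm)
  have trace_one : Algebra.trace (ZMod 2) F 1 = 1 := by
    have := Algebra.trace_algebraMap (R := ZMod 2) (S := F) 1
    rw [map_one] at this
    rw [this, hrank, nsmul_eq_mul, mul_one]
    obtain ⟨k, hk⟩ := hn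
    subst hk
    push_cast
    rw [CharTwo.two_eq_zero (R := ZMod 2)]
    ring
  -- the key identity : f (x + a⁻¹) = f x
  have key : ∀ x : F, f (x + a⁻¹) = f x := by
    intro x
    have hcube : a ^ 3 * (x + a⁻¹) ^ 3 = a ^ 3 * x ^ 3 + (a * x) ^ 2 + a * x + 1 := by
      field_simp
      ring_nf
      linear_combination (a ^ 2 * x ^ 2 + a * x) * h2
    have htr : Algebra.trace (ZMod 2) F (a ^ 3 * (x + a⁻¹) ^ 3)
        = Algebra.trace (ZMod 2) F (a ^ 3 * x ^ 3) + 1 := by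
      rw [hcube, map_add, map_add, map_add, trace_sq, trace_one]
      ring_nf
      rw [CharTwo.two_eq_zero (R := ZMod 2)]
      ring
    rw [hf, hf, htr, map_add, map_one]
    linear_combination (a⁻¹) * h2
  -- fibers
  have hfiber : ∀ x : F, f ⁻¹' {f x} = {x, x + a⁻¹} := by
    intro x
    ext y
    simp only [Set.mem_preimage, Set.mem_singleton_iff, Set.mem_insert_iff]
    constructor
    · intro hy
      have hy' : y + a⁻¹ * algebraMap (ZMod 2) F (Algebra.trace (ZMod 2) F (a ^ 3 * y ^ 3))
          = x + a⁻¹ * algebraMap (ZMod 2) F (Algebra.trace (ZMod 2) F (a ^ 3 * x ^ 3)) := by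
        rw [← hf, ← hf, hy]
      have hz : ∀ t : ZMod 2, t = 0 ∨ t = 1 := by decide
      rcases hz (Algebra.trace (ZMod 2) F (a ^ 3 * y ^ 3)) with hty | hty <;>
        rcases hz (Algebra.trace (ZMod 2) F (a ^ 3 * x ^ 3)) with htx | htx <;>
        rw [hty, htx] at hy' <;> simp only [map_zero, map_one, mul_zero, mul_one] at hy'
      · left; linear_combination hy'
      · right; linear_combination hy'
      · right; linear_combination hy' - a⁻¹ * h2
      · left; linear_combination hy'
    · rintro (rfl | rfl)
      · rfl
      · rw [key]
  have hfib2 : ∀ b ∈ Set.range f, (f ⁻¹' {b}).ncard = 2 := by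
    rintro b ⟨x, rfl⟩
    rw [hfiber x, Set.ncard_pair]
    intro h
    exact hainv (by linear_combination -h)
  refine ⟨hfib2, ?_⟩
  -- counting
  have himg : Set.range f = ↑(Finset.image f Finset.univ) := by
    simp [Set.image_univ]
  have hcount := Finset.card_eq_sum_card_image f (Finset.univ : Finset F)
  have heach : ∀ b ∈ Finset.image f Finset.univ,
      (Finset.univ.filter fun x => f x = b).card = 2 := by
    intro b hb
    obtain ⟨x, _, rfl⟩ := Finset.mem_image.mp hb
    have : ((Finset.univ.filter fun y => f y = f x : Finset F) : Set F) = f ⁻¹' {f x} := by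
      ext y; simp
    have h1 : (Finset.univ.filter fun y => f y = f x : Finset F).card
        = (f ⁻¹' {f x}).ncard := by
      rw [← this, Set.ncard_coe_finset]
    rw [h1]
    exact hfib2 (f x) ⟨x, rfl⟩
  rw [Finset.sum_congr rfl heach, Finset.sum_const, smul_eq_mul] at hcount
  rw [Finset.card_univ, hcard] at hcount
  rw [himg, Set.ncard_coe_finset]
  obtain ⟨k, hk⟩ := hn
  subst hk
  have hp : (2 : ℕ) ^ (2 * k + 1) = 2 ^ (2 * k) * 2 := pow_succ 2 (2 * k)
  rw [hp] at hcount
  have hcard2 : (Finset.image f Finset.univ).card = 2 ^ (2 * k) :=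
    Nat.eq_of_mul_eq_mul_right (by norm_num) hcount.symm
  have h1 : 2 * k + 1 - 1 = 2 * k := by omega
  rw [h1, hcard2]
end

section
/- Let n = 2k+1 be odd, q = 2^n, a ∈ F_q nonzero, and let D = { x + a⁻¹·Tr(a³x³) : x ∈ F_q }. Then for every b ∈ F_q with b ≠ 0 and b ≠ a⁻¹, the number of ordered pairs (x, y) ∈ F_q × F_q with (x + a⁻¹Tr(a³x³)) + (y + a⁻¹Tr(a³y³)) = b equals 2^n, and consequently b has exactly 2^(2k-1) representations as d₁ + d₂ with d₁, d₂ ∈ D. -/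
set_option linter.unusedSectionVars false
section aux
variable {F : Type*} [Field F] [Fintype F] [Algebra (ZMod 2) F]

lemma tr_sq' [CharP F 2] (z : F) :
    Algebra.trace (ZMod 2) F (z ^ 2) = Algebra.trace (ZMod 2) F z := by
  let e : F ≃ₐ[ZMod 2] F := AlgEquiv.ofRingEquiv (f := frobeniusEquiv F 2)
    (fun r => by rw [frobeniusEquiv_def, ← map_pow, ZMod.pow_card])
  have h := Algebra.trace_eq_of_algEquiv e z
  simpa [e, AlgEquiv.ofRingEquiv, frobeniusEquiv_def, frobenius_def] using h

lemma cube_inj' {n k : ℕ} (hn : n = 2*k+1) (hcard : Fintype.card F = 2 ^ n) :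
    Function.Injective (fun x : F => x ^ 3) := by
  classical
  have hcop : (Nat.card Fˣ).Coprime 3 := by
    rw [Nat.card_eq_fintype_card, Fintype.card_units, hcard]
    have h3 : ¬ (3 ∣ 2 ^ n - 1) := by
      intro hdvd
      have h1 : 1 ≤ 2 ^ n := Nat.one_le_two_pow
      have : ((2 ^ n - 1 : ℕ) : ZMod 3) = 0 :=
        (ZMod.natCast_eq_zero_iff _ _).mpr hdvd
      rw [Nat.cast_sub h1, Nat.cast_pow, hn, pow_succ, pow_mul] at this
      rw [show (((2:ℕ) : ZMod 3) ^ 2) = 1 from by decide, one_pow] at this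
      exact absurd this (by decide)
    exact Nat.coprime_comm.mp ((Nat.Prime.coprime_iff_not_dvd Nat.prime_three).mpr h3)
  intro x y hxy
  simp only at hxy
  by_cases hx : x = 0
  · subst hx
    have : y ^ 3 = 0 := by rw [← hxy]; simp
    exact (pow_eq_zero_iff (by norm_num)).mp this |>.symm
  by_cases hy : y = 0
  · subst hy
    rw [zero_pow (by norm_num)] at hxy
    exact absurd ((pow_eq_zero_iff (by norm_num)).mp hxy) hx
  have hu : (powCoprime hcop) (Units.mk0 x hx) = (powCoprime hcop) (Units.mk0 y hy) := by
    ext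
    simpa using hxy
  have := (powCoprime hcop).injective hu
  simpa [Units.ext_iff] using this

lemma tr_one' {n : ℕ} (hcard : Fintype.card F = 2 ^ n) (hodd : Odd n) :
    Algebra.trace (ZMod 2) F (1 : F) = 1 := by
  have hfr : Module.finrank (ZMod 2) F = n := by
    have := Module.card_eq_pow_finrank (K := ZMod 2) (V := F)
    rw [ZMod.card, hcard] at this
    exact (Nat.pow_right_injective (le_refl 2) this.symm)
  have h := Algebra.trace_algebraMap (R := ZMod 2) (S := F) 1
  rw [map_one] at h
  rw [h, hfr, nsmul_eq_mul, mul_one, ← ZMod.natCast_mod n 2, Nat.odd_iff.mp hodd, Nat.cast_one]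

lemma card_filter_comp_bij' [DecidableEq F] {g : F → F} (hg : Function.Bijective g)
    (P : F → Prop) [DecidablePred P] :
    (Finset.univ.filter fun x => P (g x)).card = (Finset.univ.filter P).card := by
  apply Finset.card_bij (fun x _ => g x)
  · intro x hx; simp only [Finset.mem_filter, Finset.mem_univ, true_and] at hx ⊢; exact hx
  · intro x _ y _ h; exact hg.1 h
  · intro z hz
    obtain ⟨x, rfl⟩ := hg.2 z
    exact ⟨x, by simpa using hz, rfl⟩

lemma tr_fiber_card' {n : ℕ} [CharP F 2] [DecidableEq F]
    (hcard : Fintype.card F = 2 ^ n) (hodd : Odd n) (t : ZMod 2) :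
    (Finset.univ.filter fun z : F => Algebra.trace (ZMod 2) F z = t).card = 2 ^ (n - 1) := by
  set T : F → ZMod 2 := fun z => Algebra.trace (ZMod 2) F z with hT
  have htr1 : T 1 = 1 := tr_one' hcard hodd
  have hadd : ∀ z w : F, T (z + w) = T z + T w := fun z w => map_add _ z w
  have hswap : ∀ s : ZMod 2,
      (Finset.univ.filter fun z : F => T z = s).card
        = (Finset.univ.filter fun z : F => T z = s + 1).card := by
    intro s
    refine Finset.card_bij' (fun z _ => z + 1) (fun z _ => z + 1) ?_ ?_ ?_ ?_
    · intro z hz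
      simp only [Finset.mem_filter, Finset.mem_univ, true_and] at hz ⊢
      rw [hadd, hz, htr1]
    · intro z hz
      simp only [Finset.mem_filter, Finset.mem_univ, true_and] at hz ⊢
      rw [hadd, hz, htr1]
      exact (by decide : ∀ u : ZMod 2, u + 1 + 1 = u) s
    · intro z _; show z + 1 + 1 = z; rw [add_assoc, CharTwo.add_self_eq_zero, add_zero]
    · intro z _; show z + 1 + 1 = z; rw [add_assoc, CharTwo.add_self_eq_zero, add_zero]
  have hsum :
      (Finset.univ.filter fun z : F => T z = 0).card
        + (Finset.univ.filter fun z : F => T z = 1).card = 2 ^ n := by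
    rw [← hcard, ← Finset.card_univ,
      Finset.filter_congr (fun z (_ : z ∈ Finset.univ) =>
        (by decide : ∀ u : ZMod 2, (u = 1) ↔ ¬(u = 0)) (T z))]
    exact Finset.card_filter_add_card_filter_not _
  have h01 : (Finset.univ.filter fun z : F => T z = 0).card
      = (Finset.univ.filter fun z : F => T z = 1).card := by
    simpa using hswap 0
  have hn1 : 1 ≤ n := hodd.pos
  have h2n : 2 ^ n = 2 * 2 ^ (n - 1) := by
    rw [← pow_succ']
    congr 1
    omega
  have hc0 : (Finset.univ.filter fun z : F => T z = 0).card = 2 ^ (n - 1) := by omega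
  rcases (by decide : ∀ u : ZMod 2, u = 0 ∨ u = 1) t with rfl | rfl
  · exact hc0
  · rw [← h01]; exact hc0

lemma main_count' {n k : ℕ} [CharP F 2] [DecidableEq F] (hn : n = 2*k+1)
    (hcard : Fintype.card F = 2 ^ n) {a c : F} (ha : a ≠ 0) (hc0 : c ≠ 0) (hca : c ≠ a⁻¹)
    (t : ZMod 2) :
    (Finset.univ.filter fun x : F =>
      Algebra.trace (ZMod 2) F (a ^ 3 * (x ^ 3 + (x + c) ^ 3)) = t).card = 2 ^ (n - 1) := by
  set T : F → ZMod 2 := fun z => Algebra.trace (ZMod 2) F z with hT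
  have h2 : (2 : F) = 0 := CharTwo.two_eq_zero
  set B : F := a ^ 3 * c + a ^ 6 * c ^ 4 with hB
  have hBne : B ≠ 0 := by
    have hfac : B = a ^ 3 * c * (1 + a ^ 3 * c ^ 3) := by rw [hB]; ring
    rw [hfac]
    refine mul_ne_zero (mul_ne_zero (pow_ne_zero 3 ha) hc0) ?_
    intro hcontra
    have h1 : a ^ 3 * c ^ 3 = 1 := by linear_combination hcontra - h2
    have h3 : (a * c) ^ 3 = (1 : F) ^ 3 := by rw [one_pow, ← h1]; ring
    have := cube_inj' hn hcard h3
    exact hca (eq_inv_of_mul_eq_one_left (by linear_combination this))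
  have hodd : Odd n := ⟨k, by omega⟩
  have hpt : ∀ x : F, a ^ 3 * (x ^ 3 + (x + c) ^ 3)
      = (a ^ 3 * c) * x ^ 2 + ((a ^ 3 * c ^ 2) * x) + a ^ 3 * c ^ 3 := by
    intro x
    linear_combination (a ^ 3 * (x ^ 3 + x ^ 2 * c + x * c ^ 2)) * h2
  have hTadd : ∀ z w : F, T (z + w) = T z + T w :=
    fun z w => map_add (Algebra.trace (ZMod 2) F) z w
  have htr : ∀ x : F, T (a ^ 3 * (x ^ 3 + (x + c) ^ 3)) = T (B * x ^ 2) + T (a ^ 3 * c ^ 3) := by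
    intro x
    rw [hpt x, hTadd]
    congr 1
    have h1 : T ((a ^ 3 * c ^ 2) * x) = T (((a ^ 3 * c ^ 2) * x) ^ 2) := (tr_sq' _).symm
    rw [hTadd, h1, ← hTadd,
      show (a ^ 3 * c) * x ^ 2 + ((a ^ 3 * c ^ 2) * x) ^ 2 = B * x ^ 2 from by rw [hB]; ring]
  set δ : ZMod 2 := T (a ^ 3 * c ^ 3) with hδ
  have hiff : ∀ x : F, (T (a ^ 3 * (x ^ 3 + (x + c) ^ 3)) = t) ↔ (T (B * x ^ 2) = t + δ) := by
    intro x
    rw [htr x]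
    exact (by decide : ∀ u d s : ZMod 2, (u + d = s ↔ u = s + d)) _ _ _
  rw [Finset.filter_congr (fun x (_ : x ∈ Finset.univ) => hiff x)]
  have hsq : Function.Bijective (fun x : F => x ^ 2) := by
    have h := bijective_frobenius F 2
    have he : ⇑(frobenius F 2) = fun x : F => x ^ 2 := funext fun x => by
      simp [frobenius_def]
    rwa [he] at h
  have hgbij : Function.Bijective (fun x : F => B * x ^ 2) :=
    (Equiv.mulLeft₀ B hBne).bijective.comp hsq
  rw [card_filter_comp_bij' hgbij (fun z => T z = t + δ)]
  exact tr_fiber_card' hcard hodd (t + δ)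
end aux

theorem stmt_2 {n k : ℕ} (hn : n = 2 * k + 1) (F : Type*) [Field F] [Fintype F]
    [Algebra (ZMod 2) F] (hcard : Fintype.card F = 2 ^ n)
    (a : F) (ha : a ≠ 0)
    (f : F → F)
    (hf : ∀ x, f x = x + a⁻¹ * algebraMap (ZMod 2) F (Algebra.trace (ZMod 2) F (a ^ 3 * x ^ 3)))
    (D : Set F) (hD : D = Set.range f)
    (b : F) (hb0 : b ≠ 0) (hba : b ≠ a⁻¹) :
    {p : F × F | f p.1 + f p.2 = b}.ncard = 2 ^ n ∧
    {p : F × F | p.1 ∈ D ∧ p.2 ∈ D ∧ p.1 + p.2 = b}.ncard = 2 ^ (2 * k - 1) := by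
  classical
  haveI : CharP F 2 := charP_of_injective_ringHom (algebraMap (ZMod 2) F).injective 2
  set T : F → ZMod 2 := fun z => Algebra.trace (ZMod 2) F z with hT
  set ι : ZMod 2 → F := fun r => algebraMap (ZMod 2) F r with hι
  have hodd : Odd n := ⟨k, by omega⟩
  have hainv : a⁻¹ ≠ 0 := inv_ne_zero ha
  have h2F : (2 : F) = 0 := CharTwo.two_eq_zero
  have hTadd : ∀ z w : F, T (z + w) = T z + T w :=
    fun z w => map_add (Algebra.trace (ZMod 2) F) z w
  have hiadd : ∀ z w : ZMod 2, ι (z + w) = ι z + ι w :=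
    fun z w => map_add (algebraMap (ZMod 2) F) z w
  have hι0 : ι 0 = 0 := map_zero (algebraMap (ZMod 2) F)
  have hι1 : ι 1 = 1 := map_one (algebraMap (ZMod 2) F)
  have hZ2 : ∀ u : ZMod 2, u = 0 ∨ u = 1 := by decide
  have hfsum : ∀ x y : F, f x + f y = (x + y) + a⁻¹ * ι (T (a ^ 3 * (x ^ 3 + y ^ 3))) := by
    intro x y
    rw [hf x, hf y, show a ^ 3 * (x ^ 3 + y ^ 3) = a ^ 3 * x ^ 3 + a ^ 3 * y ^ 3 from by ring,
      hTadd, hiadd]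
    show _ = _ + a⁻¹ * (ι _ + ι _)
    rw [hι, hT]
    ring
  have hchar : ∀ x y : F, (f x + f y = b) ↔
      ((y = x + b ∧ T (a ^ 3 * (x ^ 3 + y ^ 3)) = 0)
        ∨ (y = x + b + a⁻¹ ∧ T (a ^ 3 * (x ^ 3 + y ^ 3)) = 1)) := by
    intro x y
    rw [hfsum x y]
    constructor
    · intro h
      rcases hZ2 (T (a ^ 3 * (x ^ 3 + y ^ 3))) with h0 | h1
      · rw [h0, hι0] at h
        exact Or.inl ⟨by linear_combination h - x * h2F, h0⟩
      · rw [h1, hι1] at h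
        exact Or.inr ⟨by linear_combination h - (x + a⁻¹) * h2F, h1⟩
    · rintro (⟨rfl, h0⟩ | ⟨rfl, h1⟩)
      · rw [h0, hι0]; linear_combination x * h2F
      · rw [h1, hι1]; linear_combination (x + a⁻¹) * h2F
  -- Finset versions
  set S : Finset (F × F) := Finset.univ.filter (fun p : F × F => f p.1 + f p.2 = b) with hS
  set S0 : Finset (F × F) := Finset.univ.filter
    (fun p : F × F => p.2 = p.1 + b ∧ T (a ^ 3 * (p.1 ^ 3 + p.2 ^ 3)) = 0) with hS0
  set S1 : Finset (F × F) := Finset.univ.filter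
    (fun p : F × F => p.2 = p.1 + b + a⁻¹ ∧ T (a ^ 3 * (p.1 ^ 3 + p.2 ^ 3)) = 1) with hS1
  have hSunion : S = S0 ∪ S1 := by
    ext p
    simp only [hS, hS0, hS1, Finset.mem_union, Finset.mem_filter, Finset.mem_univ, true_and]
    exact hchar p.1 p.2
  have hdisj : Disjoint S0 S1 := by
    rw [Finset.disjoint_left]
    rintro p hp0 hp1
    simp only [hS0, hS1, Finset.mem_filter, Finset.mem_univ, true_and] at hp0 hp1
    have := hp0.1.symm.trans hp1.1
    exact hainv (by linear_combination -this)
  have hcards0 : S0.card = 2 ^ (n - 1) := by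
    rw [show S0.card = (Finset.univ.filter fun x : F =>
        T (a ^ 3 * (x ^ 3 + (x + b) ^ 3)) = 0).card from ?_]
    · exact main_count' hn hcard ha hb0 hba 0
    refine Finset.card_bij' (fun p _ => p.1) (fun x _ => (x, x + b)) ?_ ?_ ?_ ?_
    · intro p hp
      simp only [hS0, Finset.mem_filter, Finset.mem_univ, true_and] at hp ⊢
      rw [← hp.1]
      exact hp.2
    · intro x hx
      simp only [hS0, Finset.mem_filter, Finset.mem_univ, true_and] at hx ⊢
      first | exact ⟨rfl, hx⟩ | exact hx
    · intro p hp
      simp only [hS0, Finset.mem_filter, Finset.mem_univ, true_and] at hp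
      exact Prod.ext rfl hp.1.symm
    · intro x _
      rfl
  have hb0' : b + a⁻¹ ≠ 0 := fun h => hba (by linear_combination h - a⁻¹ * h2F)
  have hba' : b + a⁻¹ ≠ a⁻¹ := fun h => hb0 (by linear_combination h)
  have hcards1 : S1.card = 2 ^ (n - 1) := by
    rw [show S1.card = (Finset.univ.filter fun x : F =>
        T (a ^ 3 * (x ^ 3 + (x + (b + a⁻¹)) ^ 3)) = 1).card from ?_]
    · exact main_count' hn hcard ha hb0' hba' 1
    refine Finset.card_bij' (fun p _ => p.1) (fun x _ => (x, x + (b + a⁻¹))) ?_ ?_ ?_ ?_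
    · intro p hp
      simp only [hS1, Finset.mem_filter, Finset.mem_univ, true_and] at hp ⊢
      rw [show p.1 + (b + a⁻¹) = p.1 + b + a⁻¹ from by ring, ← hp.1]
      exact hp.2
    · intro x hx
      simp only [hS1, Finset.mem_filter, Finset.mem_univ, true_and] at hx ⊢
      exact ⟨by ring, hx⟩
    · intro p hp
      simp only [hS1, Finset.mem_filter, Finset.mem_univ, true_and] at hp
      refine Prod.ext rfl ?_
      show p.1 + (b + a⁻¹) = p.2
      rw [hp.1]; ring
    · intro x _
      rfl
  have hScard : S.card = 2 ^ n := by
    rw [hSunion, Finset.card_union_of_disjoint hdisj, hcards0, hcards1]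
    have hn1 : 1 ≤ n := hodd.pos
    rw [← two_mul, ← pow_succ']
    congr 1
    omega
  have htsq : ∀ z : F, T (z ^ 2) = T z := fun z => tr_sq' z
  have hone : T 1 = 1 := tr_one' hcard hodd
  have hpt2 : ∀ x c : F, x ^ 3 + (x + c) ^ 3 = c * x ^ 2 + c ^ 2 * x + c ^ 3 := by
    intro x c
    linear_combination (x ^ 3 + x ^ 2 * c + x * c ^ 2) * h2F
  have htrinv : ∀ x : F, T (a ^ 3 * (x ^ 3 + (x + a⁻¹) ^ 3)) = 1 := by
    intro x
    rw [hpt2 x a⁻¹, show a ^ 3 * (a⁻¹ * x ^ 2 + a⁻¹ ^ 2 * x + a⁻¹ ^ 3)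
        = (a * x) ^ 2 + (a * x + 1) from by field_simp; ring,
      hTadd, hTadd, htsq, hone]
    exact (by decide : ∀ u : ZMod 2, u + (u + 1) = 1) (T (a * x))
  have hkey : ∀ x : F, f (x + a⁻¹) = f x := by
    intro x
    have h := hfsum x (x + a⁻¹)
    rw [htrinv x, hι1] at h
    have h0 : f x + f (x + a⁻¹) = 0 := by rw [h]; linear_combination (x + a⁻¹) * h2F
    linear_combination h0 - f x * h2F
  have hfiber : ∀ x y : F, f x = f y → y = x ∨ y = x + a⁻¹ := by
    intro x y hxy
    have h0 : f x + f y = 0 := by rw [hxy, CharTwo.add_self_eq_zero]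
    rw [hfsum x y] at h0
    rcases hZ2 (T (a ^ 3 * (x ^ 3 + y ^ 3))) with h | h <;> rw [h] at h0
    · rw [hι0] at h0
      exact Or.inl (by linear_combination h0 - x * h2F)
    · rw [hι1] at h0
      exact Or.inr (by linear_combination h0 - (x + a⁻¹) * h2F)
  set Φ : F × F → F × F := fun p => (f p.1, f p.2) with hΦ
  set Tst : Finset (F × F) := Finset.univ.filter
    (fun p : F × F => p.1 ∈ D ∧ p.2 ∈ D ∧ p.1 + p.2 = b) with hTst
  have himg : S.image Φ = Tst := by
    ext q
    simp only [hTst, Finset.mem_image, Finset.mem_filter, Finset.mem_univ, true_and, hS, hD,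
      Set.mem_range]
    constructor
    · rintro ⟨p, hp, rfl⟩
      exact ⟨⟨p.1, rfl⟩, ⟨p.2, rfl⟩, hp⟩
    · rintro ⟨⟨x, hx⟩, ⟨y, hy⟩, hsum⟩
      refine ⟨(x, y), ?_, ?_⟩
      · show f x + f y = b
        rw [hx, hy]
        exact hsum
      · show (f x, f y) = q
        rw [hx, hy]
  have hfib4 : ∀ q ∈ S.image Φ, (S.filter fun p => Φ p = q).card = 4 := by
    intro q hq
    rw [Finset.mem_image] at hq
    obtain ⟨p₀, hp₀, rfl⟩ := hq
    obtain ⟨x, y⟩ := p₀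
    have hp₀' : f x + f y = b := by simpa [hS] using hp₀
    have hxne : x ≠ x + a⁻¹ := fun h => hainv (by linear_combination -h)
    have hyne : y ≠ y + a⁻¹ := fun h => hainv (by linear_combination -h)
    have hset : (S.filter fun p => Φ p = Φ (x, y))
        = {(x, y), (x + a⁻¹, y), (x, y + a⁻¹), (x + a⁻¹, y + a⁻¹)} := by
      ext p
      obtain ⟨u, v⟩ := p
      simp only [Finset.mem_filter, hS, Finset.mem_univ, true_and, hΦ, Prod.mk.injEq,
        Finset.mem_insert, Finset.mem_singleton]
      constructor
      · rintro ⟨_, h1, h2⟩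
        rcases hfiber x u h1.symm with rfl | rfl <;> rcases hfiber y v h2.symm with rfl | rfl
        · exact Or.inl ⟨rfl, rfl⟩
        · exact Or.inr (Or.inr (Or.inl ⟨rfl, rfl⟩))
        · exact Or.inr (Or.inl ⟨rfl, rfl⟩)
        · exact Or.inr (Or.inr (Or.inr ⟨rfl, rfl⟩))
      · rintro (⟨rfl, rfl⟩ | ⟨rfl, rfl⟩ | ⟨rfl, rfl⟩ | ⟨rfl, rfl⟩)
        · exact ⟨hp₀', rfl, rfl⟩
        · exact ⟨by rw [hkey]; exact hp₀', hkey x, rfl⟩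
        · exact ⟨by rw [hkey]; exact hp₀', rfl, hkey y⟩
        · exact ⟨by rw [hkey, hkey]; exact hp₀', hkey x, hkey y⟩
    rw [hset]
    rw [Finset.card_insert_of_notMem (by simp [Prod.mk.injEq, hxne, hyne]),
      Finset.card_insert_of_notMem (by simp [Prod.mk.injEq, hxne, hyne]),
      Finset.card_insert_of_notMem (by simp [Prod.mk.injEq, hxne, hyne]),
      Finset.card_singleton]
  have hcount : S.card = 4 * (S.image Φ).card := by
    rw [Finset.card_eq_sum_card_image Φ S, Finset.sum_congr rfl hfib4, Finset.sum_const,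
      smul_eq_mul, mul_comm]
  have hk1 : 1 ≤ k := by
    by_contra hk
    have hk0 : k = 0 := by omega
    have h3 : ({0, a⁻¹, b} : Finset F).card = 3 := by
      rw [Finset.card_insert_of_notMem (by simp [Ne.symm hainv, Ne.symm hb0]),
        Finset.card_insert_of_notMem (by simp [Ne.symm hba]),
        Finset.card_singleton]
    have hle := Finset.card_le_univ ({0, a⁻¹, b} : Finset F)
    rw [h3, hcard, hn, hk0] at hle
    norm_num at hle
  have himgcard : Tst.card = 2 ^ (2 * k - 1) := by
    have h4 : 4 * Tst.card = 2 ^ n := by rw [← himg, ← hcount, hScard]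
    have h2n : 2 ^ n = 4 * 2 ^ (2 * k - 1) := by
      rw [hn, show 2 * k + 1 = (2 * k - 1) + 2 from by omega, pow_add]
      ring
    omega
  constructor
  · rw [Set.ncard_eq_toFinset_card', Set.toFinset_setOf]
    exact hScard
  · rw [Set.ncard_eq_toFinset_card', Set.toFinset_setOf]
    exact himgcard
end

section
/- Let n = 2k+1 be odd and a a nonzero element of F_{2^n}. Then the image D of the map f(x) = x + a⁻¹·Tr(a³x³) is a (2^{2k}, 2, 2^{2k}, 2^{2k-1}) relative difference set in the additive group (F_{2^n}, +) relative to the subgroup N = {0, a⁻¹}: every element of F_{2^n} outside N is represented exactly 2^{2k-1} times as a difference d₁ - d₂ with d₁ ≠ d₂ in D, and no nonzero element of N is so represented. -/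
/-- `D` is a relative `(m, n, k, lam)` difference set in the additive group `G`
relative to the subgroup (given as a set) `N`: `|G| = m * n`, `|N| = n`, `|D| = k`,
every element outside `N` is represented exactly `lam` times as a difference of
distinct elements of `D`, and no nonzero element of `N` is so represented. -/
def IsRelDiffSet {G : Type*} [AddCommGroup G] (D N : Set G) (m n k lam : ℕ) : Prop :=
  Nat.card G = m * n ∧ N.ncard = n ∧ D.ncard = k ∧
  (∀ g : G, g ∉ N →
    {p : G × G | p.1 ∈ D ∧ p.2 ∈ D ∧ p.1 ≠ p.2 ∧ p.1 - p.2 = g}.ncard = lam) ∧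
  (∀ g : G, g ∈ N → g ≠ 0 →
    {p : G × G | p.1 ∈ D ∧ p.2 ∈ D ∧ p.1 ≠ p.2 ∧ p.1 - p.2 = g}.ncard = 0)

/-!
Write `t x = Tr (a³x³) ∈ 𝔽₂` and `u = a⁻¹`, so that `f x = x + u t(x)`. Expanding `(x + u)³` gives
`t (x + u) = t x + Tr ((ax)² + ax + 1) = t x + 1`, since `Tr y² = Tr y` and `Tr 1 = n = 1` for odd
`n`. Hence the fibres of `f` are the pairs `{x, x + u}`, so `|D| = 2ⁿ⁻¹`; moreover `g + f x ∈ D`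
iff `t (x + g) = t x`, so twice the number of representations of `g` as a difference in `D` is the
number of solutions of `t (x + g) = t x`. For `g = u` there are none. Otherwise, writing
`a³g = c²`, `t (x + g) + t x = Tr ((c + a³g²) x + a³g³)` is a non-constant affine functional,
because `c = a³g²` would give `(ag)³ = 1`, hence `ag = 1` as `3 ∤ 2ⁿ - 1`. It vanishes at `2ⁿ⁻¹`
points, which gives `2ⁿ⁻² = 2^(2k-1)` representations.
-/

theorem Set.ncard_preimage_eq_mul_ncard_inter_range {α β : Type*} [Finite α] {f : α → β} {m : ℕ}
    (hf : ∀ x, {y | f y = f x}.ncard = m) (S : Set β) :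
    (f ⁻¹' S).ncard = m * (S ∩ Set.range f).ncard := by
  classical
  have := Fintype.ofFinite α
  rw [← Set.image_preimage_eq_inter_range, ← Set.coe_toFinset (f ⁻¹' S), ← Finset.coe_image,
    Set.ncard_coe_finset, Set.ncard_coe_finset, Finset.card_eq_sum_card_image f, mul_comm,
    ← smul_eq_mul, ← Finset.sum_const]
  refine Finset.sum_congr rfl fun b hb => ?_
  obtain ⟨x, hx, rfl⟩ := Finset.mem_image.mp hb
  rw [← hf x, ← Set.ncard_coe_finset]
  congr 1
  ext y
  simp_all

theorem ncard_setOf_sub_eq_of_ne_zero {G : Type*} [AddGroup G] (D : Set G) {g : G} (hg : g ≠ 0) :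
    {p : G × G | p.1 ∈ D ∧ p.2 ∈ D ∧ p.1 ≠ p.2 ∧ p.1 - p.2 = g}.ncard
      = ((g + ·) ⁻¹' D ∩ D).ncard := by
  rw [← Set.ncard_image_of_injective _ (f := fun d => (g + d, d)) fun _ _ h => congrArg Prod.snd h]
  congr 1
  ext ⟨d₁, d₂⟩
  simp only [Set.mem_ofPred_eq, Set.mem_image, Set.mem_inter_iff, Set.mem_preimage, Prod.mk.injEq,
    sub_eq_iff_eq_add]
  constructor
  · rintro ⟨h₁, h₂, -, rfl⟩
    exact ⟨d₂, ⟨h₁, h₂⟩, rfl, rfl⟩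
  · rintro ⟨d, ⟨h₁, h₂⟩, rfl, rfl⟩
    exact ⟨h₁, h₂, by simpa using hg, rfl⟩

theorem two_mul_ncard_setOf_eq_zero_of_involutive {α : Type*} [Finite α] (φ : α → ZMod 2)
    {σ : α → α} (hσ : σ.Involutive) (hφ : ∀ x, φ (σ x) = φ x + 1) :
    2 * {x | φ x = 0}.ncard = Nat.card α := by
  have hcompl : {x | φ x = 0}ᶜ = σ ⁻¹' {x | φ x = 0} := by
    ext x
    simp only [Set.mem_compl_iff, Set.mem_ofPred_eq, Set.mem_preimage, hφ]
    generalize φ x = v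
    revert v; decide
  rw [← Set.ncard_add_ncard_compl {x | φ x = 0}, hcompl,
    Set.ncard_preimage_of_injective_subset_range hσ.injective (by simp [hσ.surjective.range_eq]),
    two_mul]

theorem FiniteField.eq_one_of_pow_eq_one_of_coprime {K : Type*} [Field K] [Fintype K] {m : ℕ}
    (h : (Fintype.card K - 1).Coprime m) (hm : m ≠ 0) {x : K} (hx : x ^ m = 1) : x = 1 := by
  have hx0 : x ≠ 0 := by
    rintro rfl
    exact zero_ne_one ((zero_pow hm).symm.trans hx)
  rw [← orderOf_eq_one_iff]
  exact Nat.eq_one_of_dvd_coprimes h (orderOf_dvd_of_pow_eq_one (pow_card_sub_one_eq_one x hx0))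
    (orderOf_dvd_of_pow_eq_one hx)

theorem Nat.coprime_two_pow_sub_one_three {n : ℕ} (hn : Odd n) : (2 ^ n - 1).Coprime 3 := by
  obtain ⟨k, rfl⟩ := hn
  have h4 : 4 ^ k % 3 = 1 := by rw [Nat.pow_mod]; norm_num
  have : 2 ^ (2 * k + 1) = 4 ^ k * 2 := by rw [pow_succ, pow_mul]; norm_num
  rw [Nat.coprime_comm, Nat.Prime.coprime_iff_not_dvd Nat.prime_three, this]
  have := Nat.one_le_pow k 4 (by norm_num)
  omega

open Module

section CharTwo

variable {F : Type*} [Field F] [Algebra (ZMod 2) F]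

theorem charP_two_of_algebra : CharP F 2 :=
  charP_of_injective_algebraMap (algebraMap (ZMod 2) F).injective 2

attribute [local instance] charP_two_of_algebra

noncomputable def cubeTrace (a x : F) : ZMod 2 := Algebra.trace (ZMod 2) F (a ^ 3 * x ^ 3)

noncomputable def cubeTraceMap (a x : F) : F := x + a⁻¹ * algebraMap (ZMod 2) F (cubeTrace a x)

theorem cubeTrace_add (a x g : F) :
    cubeTrace a (x + g) = cubeTrace a x +
      Algebra.trace (ZMod 2) F (a ^ 3 * g * x ^ 2 + a ^ 3 * g ^ 2 * x + a ^ 3 * g ^ 3) := by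
  rw [cubeTrace, cubeTrace, ← map_add]
  congr 1
  linear_combination (a ^ 3 * (x ^ 2 * g + x * g ^ 2)) * CharTwo.two_eq_zero (R := F)

theorem cubeTraceMap_eq_add_iff {a : F} (x y g : F) :
    cubeTraceMap a y = g + cubeTraceMap a x ↔
      y = g + x ∧ cubeTrace a y = cubeTrace a x ∨
        y = g + x + a⁻¹ ∧ cubeTrace a y = cubeTrace a x + 1 := by
  have hne : ∀ p : ZMod 2, p ≠ p + 1 := by decide
  rcases (by decide : ∀ p q : ZMod 2, q = p ∨ q = p + 1) (cubeTrace a x) (cubeTrace a y)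
    with hxy | hxy
  · simp only [cubeTraceMap, hxy, hne, and_true, and_false, or_false]
    constructor <;> intro h <;> linear_combination h
  · simp only [cubeTraceMap, hxy, (hne _).symm, and_true, and_false, false_or, map_add, map_one]
    constructor <;> intro h
    · linear_combination h - a⁻¹ * CharTwo.two_eq_zero (R := F)
    · linear_combination h + a⁻¹ * CharTwo.two_eq_zero (R := F)

variable [Fintype F]

theorem trace_sq_eq_trace (x : F) : Algebra.trace (ZMod 2) F (x ^ 2) = Algebra.trace (ZMod 2) F x :=
  Algebra.trace_eq_of_algEquiv (FiniteField.frobeniusAlgEquivOfAlgebraic (ZMod 2) F) x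

theorem trace_one_of_odd_finrank (h : Odd (finrank (ZMod 2) F)) :
    Algebra.trace (ZMod 2) F 1 = 1 := by
  rw [← map_one (algebraMap (ZMod 2) F), Algebra.trace_algebraMap, nsmul_one,
    ZMod.natCast_eq_one_iff_odd]
  exact h

theorem two_mul_ncard_trace_mul_add_eq_zero {b : F} (hb : b ≠ 0) (c : F) :
    2 * {x | Algebra.trace (ZMod 2) F (b * x + c) = 0}.ncard = Nat.card F := by
  obtain ⟨u, hu⟩ := Algebra.trace_surjective (ZMod 2) F 1
  refine two_mul_ncard_setOf_eq_zero_of_involutive _ (σ := (· + b⁻¹ * u)) (fun x => ?_) fun x => ?_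
  · simp only [add_assoc, CharTwo.add_self_eq_zero, add_zero]
  · simp only [mul_add, mul_inv_cancel_left₀ hb, add_right_comm _ u, map_add, hu]

theorem eq_one_of_pow_three_eq_one (h : Odd (finrank (ZMod 2) F)) {x : F} (hx : x ^ 3 = 1) :
    x = 1 := by
  refine FiniteField.eq_one_of_pow_eq_one_of_coprime ?_ three_ne_zero hx
  rw [card_eq_pow_finrank (K := ZMod 2), ZMod.card]
  exact Nat.coprime_two_pow_sub_one_three h

section

variable {a : F}

theorem cubeTrace_add_inv (h : Odd (finrank (ZMod 2) F)) (ha : a ≠ 0) (x : F) :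
    cubeTrace a (x + a⁻¹) = cubeTrace a x + 1 := by
  have : a ^ 3 * a⁻¹ * x ^ 2 + a ^ 3 * a⁻¹ ^ 2 * x + a ^ 3 * a⁻¹ ^ 3 = (a * x) ^ 2 + a * x + 1 := by
    field_simp
  rw [cubeTrace_add, this, map_add, map_add, trace_sq_eq_trace, CharTwo.add_self_eq_zero, zero_add,
    trace_one_of_odd_finrank h]

theorem two_mul_ncard_cubeTrace_add_eq (h : Odd (finrank (ZMod 2) F)) (ha : a ≠ 0) {g : F}
    (hg : g ≠ 0) (hga : g ≠ a⁻¹) :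
    2 * {x | cubeTrace a (x + g) = cubeTrace a x}.ncard = Nat.card F := by
  obtain ⟨c, hc⟩ := FiniteField.isSquare_of_char_two (ringChar.eq F 2) (a ^ 3 * g)
  have hb : c + a ^ 3 * g ^ 2 ≠ 0 := by
    intro h0
    have hcube : (a * g) ^ 3 = 1 := by
      refine mul_left_cancel₀ (mul_ne_zero (pow_ne_zero 3 ha) hg) ?_
      linear_combination (a ^ 3 * g ^ 2 - c) * h0 - hc
    exact hga (eq_inv_of_mul_eq_one_right (eq_one_of_pow_three_eq_one h hcube))
  rw [← two_mul_ncard_trace_mul_add_eq_zero hb (a ^ 3 * g ^ 3)]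
  congr 3
  ext x
  have hsq : Algebra.trace (ZMod 2) F (a ^ 3 * g * x ^ 2) = Algebra.trace (ZMod 2) F (c * x) := by
    rw [hc, ← trace_sq_eq_trace (c * x)]
    ring_nf
  rw [cubeTrace_add, map_add, map_add, hsq, ← map_add, ← map_add, add_mul, add_assoc]
  generalize cubeTrace a x = p
  generalize Algebra.trace (ZMod 2) F _ = q
  revert p q; decide

theorem cubeTraceMap_eq_iff (h : Odd (finrank (ZMod 2) F)) (ha : a ≠ 0) (x y : F) :
    cubeTraceMap a y = cubeTraceMap a x ↔ y = x ∨ y = x + a⁻¹ := by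
  rw [← zero_add (cubeTraceMap a x), cubeTraceMap_eq_add_iff, zero_add]
  constructor
  · rintro (⟨hy, -⟩ | ⟨hy, -⟩) <;> simp [hy]
  · rintro (rfl | rfl)
    · exact Or.inl ⟨rfl, rfl⟩
    · exact Or.inr ⟨rfl, cubeTrace_add_inv h ha x⟩

theorem ncard_fiber_cubeTraceMap (h : Odd (finrank (ZMod 2) F)) (ha : a ≠ 0) (x : F) :
    {y | cubeTraceMap a y = cubeTraceMap a x}.ncard = 2 := by
  have : {y | cubeTraceMap a y = cubeTraceMap a x} = {x, x + a⁻¹} := by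
    ext y
    exact cubeTraceMap_eq_iff h ha x y
  rw [this, Set.ncard_pair]
  simpa using inv_ne_zero ha

theorem add_mem_range_cubeTraceMap_iff (h : Odd (finrank (ZMod 2) F)) (ha : a ≠ 0) (x g : F) :
    g + cubeTraceMap a x ∈ Set.range (cubeTraceMap a) ↔ cubeTrace a (x + g) = cubeTrace a x := by
  constructor
  · rintro ⟨y, hy⟩
    rcases (cubeTraceMap_eq_add_iff x y g).mp hy with ⟨rfl, hy⟩ | ⟨rfl, hy⟩
    · rwa [add_comm]
    · rw [add_comm g x, cubeTrace_add_inv h ha] at hy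
      exact add_right_cancel hy
  · intro hx
    exact ⟨x + g, (cubeTraceMap_eq_add_iff x _ g).mpr (Or.inl ⟨add_comm x g, hx⟩)⟩

theorem two_mul_ncard_setOf_sub_eq_range_cubeTraceMap (h : Odd (finrank (ZMod 2) F)) (ha : a ≠ 0)
    {g : F} (hg : g ≠ 0) :
    2 * {p : F × F | p.1 ∈ Set.range (cubeTraceMap a) ∧ p.2 ∈ Set.range (cubeTraceMap a) ∧
        p.1 ≠ p.2 ∧ p.1 - p.2 = g}.ncard =
      {x | cubeTrace a (x + g) = cubeTrace a x}.ncard := by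
  rw [ncard_setOf_sub_eq_of_ne_zero _ hg,
    ← Set.ncard_preimage_eq_mul_ncard_inter_range (ncard_fiber_cubeTraceMap h ha)]
  congr 1
  ext x
  exact add_mem_range_cubeTraceMap_iff h ha x g

end

end CharTwo

theorem stmt_3 {n k : ℕ} (hn : n = 2 * k + 1) (F : Type*) [Field F] [Fintype F]
    [Algebra (ZMod 2) F] (hcard : Fintype.card F = 2 ^ n)
    (a : F) (ha : a ≠ 0)
    (f : F → F)
    (hf : ∀ x, f x = x + a⁻¹ * algebraMap (ZMod 2) F (Algebra.trace (ZMod 2) F (a ^ 3 * x ^ 3))) :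
    IsRelDiffSet (Set.range f) {0, a⁻¹} (2 ^ (2 * k)) 2 (2 ^ (2 * k)) (2 ^ (2 * k - 1)) := by
  obtain rfl : f = cubeTraceMap a := funext hf
  have hodd : Odd (finrank (ZMod 2) F) := by
    rw [card_eq_pow_finrank (K := ZMod 2), ZMod.card] at hcard
    rw [Nat.pow_right_injective le_rfl hcard, hn]
    exact odd_two_mul_add_one k
  have hcardF : Nat.card F = 2 * 2 ^ (2 * k) := by
    rw [Nat.card_eq_fintype_card, hcard, hn, pow_succ, mul_comm]
  have hD : Nat.card F = 2 * (Set.range (cubeTraceMap a)).ncard := by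
    simpa using Set.ncard_preimage_eq_mul_ncard_inter_range (ncard_fiber_cubeTraceMap hodd ha) .univ
  refine ⟨by rw [hcardF, mul_comm], Set.ncard_pair (inv_ne_zero ha).symm, by omega,
    fun g hg => ?_, ?_⟩
  · simp only [Set.mem_insert_iff, Set.mem_singleton_iff, not_or] at hg
    have hpairs := two_mul_ncard_setOf_sub_eq_range_cubeTraceMap hodd ha hg.1
    have hcount := two_mul_ncard_cubeTrace_add_eq hodd ha hg.1 hg.2
    cases k with
    | zero => omega
    | succ k =>
      rw [show 2 * (k + 1) = 2 * k + 1 + 1 by ring, pow_succ] at hcardF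
      rw [show 2 * (k + 1) - 1 = 2 * k + 1 by omega]
      omega
  · rintro g (rfl | rfl) hg
    · exact absurd rfl hg
    · have hempty : {x | cubeTrace a (x + a⁻¹) = cubeTrace a x} = ∅ := by
        ext x
        simp [cubeTrace_add_inv hodd ha]
      have := two_mul_ncard_setOf_sub_eq_range_cubeTraceMap hodd ha hg
      rw [hempty, Set.ncard_empty] at this
      omega
end

section
/- Let m > 1 and let k be such that gcd(2^k - 1, 2^m - 1) = 1. Then for each a ∈ F_{2^m}, Tr(a^(1/(2^k - 1))) = 0 if and only if a = t^(2^k) + t^(2^k - 1) for some t ∈ F_{2^m}. Here a^(1/(2^k-1)) denotes the unique (2^k - 1)-th root of a in F_{2^m}. -/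
open Module

theorem stmt_7 {m k : ℕ} (hm : 1 < m) (F : Type*) [Field F] [Fintype F]
    [Algebra (ZMod 2) F] (hcard : Fintype.card F = 2 ^ m)
    (hgcd : Nat.gcd (2 ^ k - 1) (2 ^ m - 1) = 1)
    (a r : F) (hr : r ^ (2 ^ k - 1) = a) :
    Algebra.trace (ZMod 2) F r = 0 ↔ ∃ t : F, a = t ^ (2 ^ k) + t ^ (2 ^ k - 1) := by
  classical
  have h4 : 4 ≤ 2 ^ m := by
    calc (4:ℕ) = 2 ^ 2 := rfl
    _ ≤ 2 ^ m := Nat.pow_le_pow_right (by norm_num) hm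
  have hk : k ≠ 0 := by
    rintro rfl
    simp only [pow_zero, Nat.sub_self, Nat.gcd_zero_left] at hgcd
    omega
  set n := 2 ^ k - 1 with hn
  have hk1 : 2 ≤ 2 ^ k := by
    calc (2:ℕ) = 2 ^ 1 := rfl
    _ ≤ 2 ^ k := Nat.pow_le_pow_right (by norm_num) (Nat.one_le_iff_ne_zero.mpr hk)
  have hn1 : n + 1 = 2 ^ k := by omega
  have hn0 : n ≠ 0 := by omega
  haveI : CharP F 2 := charP_of_injective_ringHom (algebraMap (ZMod 2) F).injective 2
  haveI : ExpChar F 2 := .prime (by norm_num)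
  haveI : Module.Finite (ZMod 2) F := Module.Finite.of_finite
  have h11 : (1 : F) + 1 = 0 := CharTwo.add_self_eq_zero 1
  have hself : ∀ x : F, x + x = 0 := CharTwo.add_self_eq_zero
  -- injectivity of x ↦ x ^ n
  have hinj : Function.Injective (fun x : F => x ^ n) := by
    intro x y hxy
    simp only at hxy
    rcases eq_or_ne x 0 with rfl | hx0
    · rw [zero_pow hn0, eq_comm, pow_eq_zero_iff hn0] at hxy
      exact hxy.symm
    rcases eq_or_ne y 0 with rfl | hy0
    · rw [zero_pow hn0, pow_eq_zero_iff hn0] at hxy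
      exact hxy
    have hcop : (Nat.card Fˣ).Coprime n := by
      rw [Nat.card_eq_fintype_card, Fintype.card_units, hcard]
      exact Nat.Coprime.symm hgcd
    have hu : (Units.mk0 x hx0) ^ n = (Units.mk0 y hy0) ^ n := by
      ext
      push_cast
      exact hxy
    have := (powCoprime hcop).injective hu
    exact congrArg Units.val this
  -- trace is invariant under squaring
  have hfr : ∀ x : F, frobeniusEquiv F 2 x = x ^ 2 := fun x => rfl
  have h1c : ∀ c : ZMod 2, c ^ 2 = c := by decide
  let e : F ≃ₐ[ZMod 2] F := AlgEquiv.ofRingEquiv (f := frobeniusEquiv F 2)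
    (fun c => by rw [hfr, ← map_pow, h1c])
  have htr2 : ∀ x : F, Algebra.trace (ZMod 2) F (x ^ 2) = Algebra.trace (ZMod 2) F x :=
    fun x => Algebra.trace_eq_of_algEquiv e x
  have htrpow : ∀ (j : ℕ) (x : F),
      Algebra.trace (ZMod 2) F (x ^ 2 ^ j) = Algebra.trace (ZMod 2) F x := by
    intro j
    induction j with
    | zero => intro x; rw [pow_zero, pow_one]
    | succ j ih =>
      intro x
      have : x ^ 2 ^ (j + 1) = (x ^ 2 ^ j) ^ 2 := by
        rw [← pow_mul, pow_succ]
      rw [this, htr2, ih]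
  -- the linear map φ x = x ^ 2^k + x
  let φ : F →ₗ[ZMod 2] F :=
    { toFun := fun x => x ^ 2 ^ k + x
      map_add' := fun x y => by rw [add_pow_char_pow]; ring
      map_smul' := fun c x => by
        rw [RingHom.id_apply, smul_add, Algebra.smul_def, Algebra.smul_def,
          mul_pow, ← map_pow, ZMod.pow_card_pow] }
  have hφ : ∀ x : F, φ x = x ^ 2 ^ k + x := fun x => rfl
  -- kernel of φ is the span of 1
  have hker : LinearMap.ker φ = Submodule.span (ZMod 2) {(1 : F)} := by
    apply le_antisymm
    · intro x hx
      have hx' : x ^ 2 ^ k + x = 0 := hx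
      have hxx : x ^ 2 ^ k = x := by
        calc x ^ 2 ^ k = (x ^ 2 ^ k + x) + x := by rw [add_assoc, hself, add_zero]
        _ = x := by rw [hx', zero_add]
      rcases eq_or_ne x 0 with rfl | hx0
      · exact Submodule.zero_mem _
      · have hxn : x ^ n = 1 := by
          have h' : x ^ n * x = 1 * x := by
            rw [← pow_succ, hn1, hxx, one_mul]
          exact mul_right_cancel₀ hx0 h'
        have hxm : x ^ (2 ^ m - 1) = 1 := by
          have := FiniteField.pow_card_sub_one_eq_one x hx0
          rwa [hcard] at this
        have hd : orderOf x ∣ 1 := by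
          rw [← hgcd]
          exact Nat.dvd_gcd (orderOf_dvd_of_pow_eq_one hxn) (orderOf_dvd_of_pow_eq_one hxm)
        have hx1 : x = 1 := orderOf_eq_one_iff.mp (Nat.dvd_one.mp hd)
        rw [hx1]
        exact Submodule.mem_span_singleton_self 1
    · rw [Submodule.span_le, Set.singleton_subset_iff]
      show φ 1 = 0
      rw [hφ, one_pow, h11]
  -- finrank computations
  have hF : Module.finrank (ZMod 2) F = m := by
    have := card_eq_pow_finrank (K := ZMod 2) (V := F)
    rw [hcard, ZMod.card] at this
    exact Nat.pow_right_injective le_rfl this.symm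
  have hkerφ : Module.finrank (ZMod 2) (LinearMap.ker φ) = 1 := by
    rw [hker]
    exact finrank_span_singleton one_ne_zero
  have hrangeφ : Module.finrank (ZMod 2) (LinearMap.range φ) = m - 1 := by
    have := LinearMap.finrank_range_add_finrank_ker φ
    rw [hF, hkerφ] at this
    omega
  -- trace kernel
  have hT : Algebra.trace (ZMod 2) F ≠ 0 := Algebra.trace_ne_zero (ZMod 2) F
  have hrangeT : LinearMap.range (Algebra.trace (ZMod 2) F) = ⊤ := by
    obtain ⟨x, hx⟩ : ∃ x : F, Algebra.trace (ZMod 2) F x ≠ 0 := by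
      by_contra h
      push_neg at h
      exact hT (LinearMap.ext h)
    have hx1 : Algebra.trace (ZMod 2) F x = 1 := by
      have : ∀ c : ZMod 2, c ≠ 0 → c = 1 := by decide
      exact this _ hx
    rw [Submodule.eq_top_iff']
    intro y
    exact ⟨y • x, by rw [map_smul, hx1, smul_eq_mul, mul_one]⟩
  have hkerT : Module.finrank (ZMod 2) (LinearMap.ker (Algebra.trace (ZMod 2) F)) = m - 1 := by
    have := LinearMap.finrank_range_add_finrank_ker (Algebra.trace (ZMod 2) F)
    rw [hF, hrangeT, finrank_top, finrank_self] at this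
    omega
  -- range φ = ker trace
  have hle : LinearMap.range φ ≤ LinearMap.ker (Algebra.trace (ZMod 2) F) := by
    rintro _ ⟨x, rfl⟩
    show Algebra.trace (ZMod 2) F (x ^ 2 ^ k + x) = 0
    rw [map_add, htrpow k x, CharTwo.add_self_eq_zero]
  have heq : LinearMap.range φ = LinearMap.ker (Algebra.trace (ZMod 2) F) :=
    Submodule.eq_of_le_of_finrank_eq hle (by rw [hrangeφ, hkerT])
  constructor
  · intro h0
    have hrk : r ∈ LinearMap.range φ := by
      rw [heq]
      exact h0
    obtain ⟨x, hx⟩ := hrk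
    rw [hφ] at hx
    refine ⟨x ^ n + 1, ?_⟩
    have ht1 : (x ^ n + 1) + 1 = x ^ n := by rw [add_assoc, h11, add_zero]
    calc a = r ^ n := hr.symm
    _ = (x ^ 2 ^ k + x) ^ n := by rw [hx]
    _ = ((x ^ n + 1) * x) ^ n := by rw [← hn1]; ring
    _ = (x ^ n + 1) ^ n * x ^ n := mul_pow _ _ _
    _ = (x ^ n + 1) ^ n * ((x ^ n + 1) + 1) := by rw [ht1]
    _ = (x ^ n + 1) ^ (2 ^ k) + (x ^ n + 1) ^ n := by rw [← hn1]; ring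
  · rintro ⟨t, rfl⟩
    obtain ⟨x, hx⟩ : ∃ x : F, x ^ n = t + 1 :=
      (Finite.injective_iff_surjective.mp hinj) (t + 1)
    have hr' : (x ^ 2 ^ k + x) ^ n = r ^ n := by
      rw [hr]
      calc (x ^ 2 ^ k + x) ^ n = ((x ^ n + 1) * x) ^ n := by rw [← hn1]; ring
      _ = (x ^ n + 1) ^ n * x ^ n := mul_pow _ _ _
      _ = ((t + 1) + 1) ^ n * (t + 1) := by rw [hx]
      _ = t ^ n * (t + 1) := by rw [add_assoc, h11, add_zero]
      _ = t ^ 2 ^ k + t ^ n := by rw [← hn1]; ring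
    have hxr : x ^ 2 ^ k + x = r := hinj hr'
    have : r ∈ LinearMap.ker (Algebra.trace (ZMod 2) F) := hle ⟨x, by rw [hφ, hxr]⟩
    exact this
end

section
/- Let m > 1 and k be such that gcd(2^k - 1, 2^m - 1) = 1. Then the map f : F_{2^m} → F_{2^m} given by f(t) = t^(2^k) + t^(2^k - 1) is 2-to-1 on its image; in particular its image has exactly 2^(m-1) elements. -/
/-!
Write `q = 2 ^ k`. Since `t ^ q + t ^ (q - 1) = t ^ (q - 1) * (t + 1)`, the fibre over `0`
is `{0, 1}`. For `b ≠ 0` the substitution `u = t⁻¹` turns `f t = b` into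
`b * u ^ q + u = 1`, where `u ↦ b * u ^ q + u` is additive in characteristic `2`. Its
solution set is therefore empty or a translate of its kernel, and the kernel consists of `0`
and the solutions of `u ^ (q - 1) = b⁻¹`, of which there is exactly one because `q - 1` is
prime to `|Fˣ|`. So all nonempty fibres have two elements, and `|F| = 2 * |range f|`.
-/

open Set Pointwise

theorem Nat.card_eq_mul_ncard_range_of_ncard_fiber {α β : Type*} [Finite α] {f : α → β}
    {n : ℕ} (h : ∀ b ∈ range f, (f ⁻¹' {b}).ncard = n) :
    Nat.card α = n * (range f).ncard := by
  classical
  have := Fintype.ofFinite α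
  have hrange : range f = ↑(Finset.univ.image f) := by simp
  rw [Nat.card_eq_fintype_card, ← Finset.card_univ, Finset.card_eq_sum_card_image f Finset.univ,
    hrange, ncard_coe_finset, mul_comm, ← smul_eq_mul, ← Finset.sum_const]
  refine Finset.sum_congr rfl fun b hb => ?_
  rw [← h b (hrange ▸ hb), ← ncard_coe_finset]
  congr 1
  ext
  simp

theorem AddMonoidHom.ncard_preimage_singleton_apply {G H : Type*} [AddGroup G] [AddGroup H]
    (L : G →+ H) (c : G) : (L ⁻¹' {L c}).ncard = (L ⁻¹' {0}).ncard := by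
  have hpre : L ⁻¹' {L c} = (· - c) ⁻¹' (L ⁻¹' {0}) := by
    ext u
    simp [sub_eq_zero]
  rw [hpre, ncard_preimage_of_injective_subset_range sub_left_injective
    fun x _ => ⟨x + c, add_sub_cancel_right x c⟩]

theorem FiniteField.pow_bijective_of_coprime {F : Type*} [Field F] [Fintype F] {n : ℕ}
    (hn : n ≠ 0) (hcop : (Fintype.card F - 1).Coprime n) :
    Function.Bijective (· ^ n : F → F) := by
  classical
  rw [← Finite.injective_iff_bijective, Finite.injective_iff_surjective]
  intro c
  rcases eq_or_ne c 0 with rfl | hc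
  · exact ⟨0, zero_pow hn⟩
  · rw [← Fintype.card_units, ← Nat.card_eq_fintype_card] at hcop
    obtain ⟨u, hu⟩ := hcop.pow_left_bijective.surjective (Units.mk0 c hc)
    exact ⟨u, by simpa using congrArg Units.val hu⟩

theorem two_pow_sub_one_ne_zero {k : ℕ} (hk : k ≠ 0) : 2 ^ k - 1 ≠ 0 := by
  have := Nat.one_lt_two_pow hk
  omega

section CharTwo

variable {F : Type*} [Field F] [CharP F 2] {k : ℕ}

def linearizedBinomial (b : F) (k : ℕ) : F →+ F where
  toFun u := b * u ^ 2 ^ k + u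
  map_zero' := by simp
  map_add' x y := by rw [add_pow_char_pow]; ring

theorem linearizedBinomial_apply (b u : F) : linearizedBinomial b k u = b * u ^ 2 ^ k + u := rfl

theorem linearizedBinomial_eq_zero_iff {b : F} (hb : b ≠ 0) {u : F} :
    linearizedBinomial b k u = 0 ↔ u = 0 ∨ u ^ (2 ^ k - 1) = b⁻¹ := by
  rw [linearizedBinomial_apply, ← mul_pow_sub_one (pow_ne_zero k two_ne_zero) u,
    ← mul_eq_one_iff_eq_inv₀ hb,
    show b * (u * u ^ (2 ^ k - 1)) + u = u * (u ^ (2 ^ k - 1) * b + 1) by ring, mul_eq_zero,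
    CharTwo.add_eq_zero]

theorem ncard_preimage_zero_linearizedBinomial [Fintype F] (hk : k ≠ 0)
    (hcop : (Fintype.card F - 1).Coprime (2 ^ k - 1)) {b : F} (hb : b ≠ 0) :
    (linearizedBinomial b k ⁻¹' {0}).ncard = 2 := by
  have hq := two_pow_sub_one_ne_zero hk
  obtain ⟨s, hs, hs_unique⟩ :=
    (FiniteField.pow_bijective_of_coprime hq hcop).existsUnique b⁻¹
  have hs0 : s ≠ 0 := by
    rintro rfl
    exact inv_ne_zero hb (hs.symm.trans (zero_pow hq))
  have hker : linearizedBinomial b k ⁻¹' {0} = {0, s} := by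
    ext u
    simp only [mem_preimage, mem_singleton_iff, mem_insert_iff, linearizedBinomial_eq_zero_iff hb]
    exact or_congr_right ⟨hs_unique u, fun h => h ▸ hs⟩
  rw [hker, ncard_pair hs0.symm]

theorem pow_add_pow_sub_one_eq_zero_iff (hk : k ≠ 0) {t : F} :
    t ^ 2 ^ k + t ^ (2 ^ k - 1) = 0 ↔ t = 0 ∨ t = 1 := by
  have hq := two_pow_sub_one_ne_zero hk
  rw [← pow_sub_one_mul (pow_ne_zero k two_ne_zero) t,
    show t ^ (2 ^ k - 1) * t + t ^ (2 ^ k - 1) = t ^ (2 ^ k - 1) * (t + 1) by ring, mul_eq_zero,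
    pow_eq_zero_iff hq, CharTwo.add_eq_zero]

theorem pow_add_pow_sub_one_eq_iff (hk : k ≠ 0) {b : F} (hb : b ≠ 0) {t : F} :
    t ^ 2 ^ k + t ^ (2 ^ k - 1) = b ↔ linearizedBinomial b k t⁻¹ = 1 := by
  rcases eq_or_ne t 0 with rfl | ht
  · simp [hk, two_pow_sub_one_ne_zero hk, hb.symm]
  have hscale : linearizedBinomial b k t⁻¹ * t ^ 2 ^ k = b + t ^ (2 ^ k - 1) := by
    rw [linearizedBinomial_apply, add_mul, inv_pow, inv_mul_cancel_right₀ (pow_ne_zero _ ht),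
      ← mul_pow_sub_one (pow_ne_zero k two_ne_zero) t, inv_mul_cancel_left₀ ht]
  conv_rhs => rw [← mul_left_inj' (pow_ne_zero (2 ^ k) ht), hscale, one_mul]
  rw [CharTwo.add_eq_iff_eq_add, eq_comm]

theorem ncard_preimage_pow_add_pow_sub_one [Fintype F] (hk : k ≠ 0)
    (hcop : (Fintype.card F - 1).Coprime (2 ^ k - 1)) {b : F}
    (hb : b ∈ range fun t : F => t ^ 2 ^ k + t ^ (2 ^ k - 1)) :
    ((fun t : F => t ^ 2 ^ k + t ^ (2 ^ k - 1)) ⁻¹' {b}).ncard = 2 := by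
  obtain ⟨a, ha⟩ := hb
  rcases eq_or_ne b 0 with rfl | hb0
  · have hfiber : (fun t : F => t ^ 2 ^ k + t ^ (2 ^ k - 1)) ⁻¹' {0} = {0, 1} := by
      ext t
      simp [pow_add_pow_sub_one_eq_zero_iff hk]
    rw [hfiber, ncard_pair zero_ne_one]
  · have hLa : linearizedBinomial b k a⁻¹ = 1 := (pow_add_pow_sub_one_eq_iff hk hb0).1 ha
    have hfiber : (fun t : F => t ^ 2 ^ k + t ^ (2 ^ k - 1)) ⁻¹' {b} =
        (linearizedBinomial b k ⁻¹' {linearizedBinomial b k a⁻¹})⁻¹ := by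
      ext t
      simp [hLa, pow_add_pow_sub_one_eq_iff hk hb0]
    rw [hfiber, ncard_inv, AddMonoidHom.ncard_preimage_singleton_apply,
      ncard_preimage_zero_linearizedBinomial hk hcop hb0]

end CharTwo

theorem stmt_8 {m k : ℕ} (hm : 1 < m) (F : Type*) [Field F] [Fintype F]
    [Algebra (ZMod 2) F] (hcard : Fintype.card F = 2 ^ m)
    (hgcd : Nat.gcd (2 ^ k - 1) (2 ^ m - 1) = 1)
    (f : F → F) (hf : ∀ t, f t = t ^ (2 ^ k) + t ^ (2 ^ k - 1)) :
    (∀ b ∈ Set.range f, (f ⁻¹' {b}).ncard = 2) ∧ (Set.range f).ncard = 2 ^ (m - 1) := by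
  have : CharP F 2 := charP_of_injective_algebraMap (algebraMap (ZMod 2) F).injective 2
  have hk : k ≠ 0 := by
    rintro rfl
    have : 2 ^ 2 ≤ 2 ^ m := Nat.pow_le_pow_right two_pos hm
    simp only [pow_zero, tsub_self, Nat.gcd_zero_left, Nat.pred_eq_succ_iff, zero_add] at hgcd
    omega
  have hcop : (Fintype.card F - 1).Coprime (2 ^ k - 1) := by
    rw [hcard]
    exact Nat.Coprime.symm hgcd
  obtain rfl : f = fun t => t ^ 2 ^ k + t ^ (2 ^ k - 1) := funext hf
  have hfibers := fun b => ncard_preimage_pow_add_pow_sub_one (b := b) hk hcop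
  refine ⟨hfibers, ?_⟩
  have hcount := Nat.card_eq_mul_ncard_range_of_ncard_fiber hfibers
  obtain ⟨n, rfl⟩ : ∃ n, m = n + 1 := ⟨m - 1, by omega⟩
  rw [Nat.card_eq_fintype_card, hcard, pow_succ] at hcount
  rw [Nat.add_sub_cancel]
  omega
end

section
/- Let k ≥ 2 and q = 2^(2k-1). Let D = { x^(2^k - 1) + x^(2^k) : x ∈ F_q }. Then D is a (2^(2k-2), 2, 2^(2k-2), 2^(2k-3)) relative difference set in (F_q, +) relative to the subgroup N = {0, 1}: |D| = 2^(2k-2), every b ∈ F_q \ {0, 1} is expressed exactly 2^(2k-3) times as d₁ - d₂ with d₁ ≠ d₂ in D, and 1 is never so expressed. -/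
set_option linter.unusedSectionVars false
set_option linter.unusedVariables false


open Finset

namespace RDS12

variable {F : Type*} [Field F] [Fintype F] [DecidableEq F] [CharP F 2]

lemma h2 : (2 : F) = 0 := CharTwo.two_eq_zero

lemma eq_of_add_eq_zero {x y : F} (h : x + y = 0) : x = y := by
  have h' : x = -y := eq_neg_of_add_eq_zero_left h
  rwa [CharTwo.neg_eq] at h'

lemma sq_inj : Function.Injective fun x : F => x ^ 2 := by
  intro x y hxy
  simp only at hxy
  have : (x + y) ^ 2 = 0 := by rw [CharTwo.add_sq, hxy]; exact CharTwo.add_self_eq_zero _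
  exact eq_of_add_eq_zero (pow_eq_zero_iff two_ne_zero |>.mp this)

lemma sq_surj : Function.Surjective fun x : F => x ^ 2 :=
  Finite.surjective_of_injective sq_inj

lemma sigK_add (k : ℕ) (x y : F) : (x + y) ^ 2 ^ k = x ^ 2 ^ k + y ^ 2 ^ k :=
  add_pow_char_pow x y 2 k

lemma pow_q (k : ℕ) (hcard : Fintype.card F = 2 ^ (2 * k - 1)) (x : F) :
    x ^ 2 ^ (2 * k - 1) = x := by rw [← hcard]; exact FiniteField.pow_card x

lemma pow_q_pow (k m : ℕ) (hcard : Fintype.card F = 2 ^ (2 * k - 1)) (x : F) :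
    x ^ (2 ^ (2 * k - 1)) ^ m = x := by rw [← hcard]; exact FiniteField.pow_card_pow m x

lemma pow_qq (k : ℕ) (hk : 1 ≤ k) (hcard : Fintype.card F = 2 ^ (2 * k - 1)) (x : F) :
    x ^ 2 ^ (2 * k) = x ^ 2 := by
  have e : 2 ^ (2 * k) = 2 ^ (2 * k - 1) * 2 := by
    rw [← pow_succ]; congr 1; omega
  rw [e, pow_mul, pow_q k hcard]

/-- x ^ (1 + c*(q-1)) = x -/
lemma pow_one_add (k c : ℕ) (hcard : Fintype.card F = 2 ^ (2 * k - 1)) (x : F) :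
    x ^ (1 + c * (2 ^ (2 * k - 1) - 1)) = x := by
  rcases eq_or_ne x 0 with rfl | hx
  · rw [zero_pow]; omega
  · rw [pow_add, pow_one, mul_comm c, pow_mul, ← hcard,
      FiniteField.pow_card_sub_one_eq_one x hx, one_pow, mul_one]

/-- generic two-to-one counting -/
lemma two_to_one_card (h : F → F)
    (hfib : ∀ a ∈ univ.image h, #(univ.filter fun x => h x = a) = 2) :
    2 * #(univ.image h) = Fintype.card F := by
  have H := Finset.card_eq_sum_card_image h (univ : Finset F)
  rw [Finset.card_univ] at H
  rw [H, Finset.sum_congr rfl hfib, Finset.sum_const, smul_eq_mul, mul_comm]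

lemma frob_fix (k : ℕ) (hk : 2 ≤ k) (hcard : Fintype.card F = 2 ^ (2 * k - 1))
    {v : F} (h : v ^ 2 ^ (k - 1) = v) : v ^ 2 = v := by
  have iter : ∀ m, v ^ 2 ^ ((k - 1) * m) = v := by
    intro m
    induction m with
    | zero => simpa using pow_one v
    | succ m ih =>
      have e : 2 ^ ((k - 1) * (m + 1)) = 2 ^ ((k - 1) * m) * 2 ^ (k - 1) := by
        rw [mul_add, mul_one, pow_add]
      rw [e, pow_mul, ih, h]
  obtain ⟨j, rfl⟩ : ∃ j, k = j + 2 := ⟨k - 2, by omega⟩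
  have key := iter (2 * (j + 2) - 3)
  have e1 : j + 2 - 1 = j + 1 := by omega
  have e2 : 2 * (j + 2) - 3 = 2 * j + 1 := by omega
  have e : (j + 2 - 1) * (2 * (j + 2) - 3) = (2 * (j + 2) - 1) * j + 1 := by
    rw [e1, e2]
    have e3 : 2 * (j + 2) - 1 = 2 * j + 3 := by omega
    rw [e3]; ring
  rw [e] at key
  have e4 : 2 ^ ((2 * (j + 2) - 1) * j + 1) = (2 ^ (2 * (j + 2) - 1)) ^ j * 2 := by
    rw [pow_succ, pow_mul]
  rw [e4, pow_mul, pow_q_pow (j + 2) j hcard] at key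
  exact key

/-- the function in question -/
def fD (k : ℕ) (x : F) : F := x ^ (2 ^ k - 1) + x ^ 2 ^ k

lemma ymul (k : ℕ) (hk : 1 ≤ k) (y : F) :
    y * fD k y = y ^ 2 ^ k + y ^ 2 ^ k * y := by
  have h1 : 1 ≤ 2 ^ k := Nat.one_le_two_pow
  have e : y * y ^ (2 ^ k - 1) = y ^ 2 ^ k := by
    rw [← pow_succ']; congr 1; omega
  unfold fD; rw [mul_add, e]; ring

lemma fD_zero (k : ℕ) (hk : 1 ≤ k) : fD k (0 : F) = 0 := by
  have h1 : 2 ≤ 2 ^ k := by calc 2 = 2^1 := rfl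
                                 _ ≤ 2^k := Nat.pow_le_pow_right (by norm_num) hk
  unfold fD
  rw [zero_pow (by omega), zero_pow (by omega), add_zero]

lemma fD_one (k : ℕ) : fD k (1 : F) = 0 := by
  unfold fD; rw [one_pow, one_pow]; exact CharTwo.add_self_eq_zero 1

lemma fiber_props (k : ℕ) (hk : 1 ≤ k) (hcard : Fintype.card F = 2 ^ (2 * k - 1))
    {d y : F} (hd : d ≠ 0) (hy : fD k y = d) :
    y ≠ 0 ∧ (y ^ 2 ^ k + y ^ 2 ^ k * y = d * y) ∧
      (y ^ 2 ^ k * (y ^ 2 + d ^ 2 ^ k) = y ^ 2) ∧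
      (y + y ^ 2 = d * y ^ 2 + d * d ^ 2 ^ k) := by
  have hy0 : y ≠ 0 := by
    rintro rfl; rw [fD_zero k hk] at hy; exact hd hy.symm
  have E1 : y ^ 2 ^ k + y ^ 2 ^ k * y = d * y := by
    have h := ymul k hk y
    rw [hy] at h
    rw [← h]; ring
  have E2 : y ^ 2 + y ^ 2 * y ^ 2 ^ k = d ^ 2 ^ k * y ^ 2 ^ k := by
    have h := congrArg (fun z : F => z ^ 2 ^ k) E1
    rw [sigK_add, mul_pow, mul_pow] at h
    have ee : 2 ^ k * 2 ^ k = 2 ^ (2 * k) := by rw [← pow_add]; congr 1; omega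
    have key : (y ^ 2 ^ k) ^ 2 ^ k = y ^ 2 := by
      rw [← pow_mul, ee, pow_qq k hk hcard]
    rwa [key] at h
  have E3 : y ^ 2 ^ k * (y ^ 2 + d ^ 2 ^ k) = y ^ 2 := by
    linear_combination (-1 : F) * E2 + y ^ 2 ^ k * y ^ 2 * (h2 (F := F))
  have E4 : y * (y + y ^ 2) = y * (d * y ^ 2 + d * d ^ 2 ^ k) := by
    linear_combination (y ^ 2 + d ^ 2 ^ k) * E1 + (1 + y) * E3 +
      (y ^ 2 + y ^ 3 - y ^ 2 ^ k * d ^ 2 ^ k - y ^ 2 ^ k * d ^ 2 ^ k * y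
        - y ^ 2 ^ k * y ^ 2 - y ^ 2 ^ k * y ^ 3) * (h2 (F := F))
  exact ⟨hy0, E1, E3, mul_left_cancel₀ hy0 E4⟩


lemma fiber_partner (k : ℕ) (hk : 1 ≤ k) (hcard : Fintype.card F = 2 ^ (2 * k - 1))
    {d y : F} (hd : d ≠ 0) (hd1 : d ≠ 1) (hy : fD k y = d) :
    fD k (y + (1 + d)⁻¹) = d ∧ y + (1 + d)⁻¹ ≠ y := by
  obtain ⟨hy0, E1, E3, hq⟩ := fiber_props k hk hcard hd hy
  have hc : (1 + d) ≠ 0 := fun h => hd1 (eq_of_add_eq_zero h).symm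
  have r1 : (1 + d) * (1 + d)⁻¹ = 1 := mul_inv_cancel₀ hc
  have hcK : (1 + d) ^ 2 ^ k = 1 + d ^ 2 ^ k := by rw [sigK_add, one_pow]
  have r2 : (1 + d ^ 2 ^ k) * ((1 + d)⁻¹) ^ 2 ^ k = 1 := by
    rw [← hcK, ← mul_pow, r1, one_pow]
  have he0 : (1 + d)⁻¹ ≠ 0 := inv_ne_zero hc
  have hK0 : 2 ^ k ≠ 0 := by positivity
  have hy' : y + (1 + d)⁻¹ ≠ 0 := by
    intro h0
    have hey : y = (1 + d)⁻¹ := eq_of_add_eq_zero h0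
    rw [hey] at hq
    have hdd : (1 + d) ^ 2 * (d * d ^ 2 ^ k) = 0 := by
      linear_combination (-(1 + d) ^ 2) * hq +
        (2 - d ^ 2 * (1 + d)⁻¹ + (1 + d)⁻¹) * r1 + (h2 (F := F))
    rcases mul_eq_zero.mp hdd with h | h
    · exact hc (pow_eq_zero_iff two_ne_zero |>.mp h)
    · rcases mul_eq_zero.mp h with h' | h'
      · exact hd h'
      · exact hd (pow_eq_zero_iff hK0 |>.mp h')
  have Tred : (1 + d ^ 2 ^ k) * (y ^ 2 ^ k + d) = (1 + d) * (1 + y) + 1 := by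
    linear_combination (1 + y) * E1 + E3 + hq +
      (-1 + d ^ 2 ^ k * d + d * y ^ 2 - y ^ 2 ^ k * y - y ^ 2 ^ k * y ^ 2 - y) * (h2 (F := F))
  have hEx : (y + (1 + d)⁻¹) ^ 2 ^ k = y ^ 2 ^ k + ((1 + d)⁻¹) ^ 2 ^ k :=
    sigK_add k y ((1 + d)⁻¹)
  have main : ((1 + d) * (1 + d ^ 2 ^ k)) *
        ((y + (1 + d)⁻¹) ^ 2 ^ k + (y + (1 + d)⁻¹) ^ 2 ^ k * (y + (1 + d)⁻¹)) =
      ((1 + d) * (1 + d ^ 2 ^ k)) * (d * (y + (1 + d)⁻¹)) := by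
    rw [hEx]
    linear_combination ((1 + d) * (1 + d ^ 2 ^ k)) * E1 + Tred +
      (1 - d ^ 2 ^ k * d + d ^ 2 ^ k * y ^ 2 ^ k - d + y ^ 2 ^ k) * r1 +
      (1 + d + d * (1 + d)⁻¹ + d * y + (1 + d)⁻¹ + y) * r2 +
      (2 - d ^ 2 ^ k * d + d * y + y) * (h2 (F := F))
  have hcc : (1 + d) * (1 + d ^ 2 ^ k) ≠ 0 :=
    mul_ne_zero hc (by rw [← hcK]; exact pow_ne_zero _ hc)
  have E1' := mul_left_cancel₀ hcc main
  have hmul := ymul k hk (y + (1 + d)⁻¹)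
  rw [E1'] at hmul
  refine ⟨mul_left_cancel₀ hy' ?_, ?_⟩
  · rw [hmul]; ring
  · intro hcontra
    rw [add_comm] at hcontra
    exact he0 (by simpa using congrArg (fun z => z - y) hcontra)
lemma one_not_image (k : ℕ) (hk : 1 ≤ k) (hcard : Fintype.card F = 2 ^ (2 * k - 1))
    (y : F) : fD k y ≠ 1 := by
  intro hy
  obtain ⟨hy0, E1, E3, hq⟩ := fiber_props k hk hcard one_ne_zero hy
  have h1 : y = 1 := by
    rw [one_pow] at hq
    linear_combination hq
  rw [h1, fD_one] at hy
  exact one_ne_zero hy.symm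

lemma fiber_unique (k : ℕ) (hk : 1 ≤ k) (hcard : Fintype.card F = 2 ^ (2 * k - 1))
    {d z y : F} (hd0 : d ≠ 0) (hd1 : d ≠ 1) (hz : fD k z = d) (hy : fD k y = d) :
    z = y ∨ z = y + (1 + d)⁻¹ := by
  obtain ⟨_, _, _, hqz⟩ := fiber_props k hk hcard hd0 hz
  obtain ⟨_, _, _, hqy⟩ := fiber_props k hk hcard hd0 hy
  have hc : (1 + d) ≠ 0 := fun h => hd1 (eq_of_add_eq_zero h).symm
  have huu : (z + y) * (1 + (z + y) * (1 + d)) = 0 := by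
    linear_combination hqz - hqy + (y + y ^ 2 + d * z ^ 2 + z * y + d * z * y) * (h2 (F := F))
  rcases mul_eq_zero.mp huu with h | h
  · left; exact eq_of_add_eq_zero h
  · right
    have h1 : (z + y) * (1 + d) = 1 := (eq_of_add_eq_zero h).symm
    have h3 : z + y = (1 + d)⁻¹ := eq_inv_of_mul_eq_one_left h1
    linear_combination h3 - y * (h2 (F := F))

lemma fiber_card (k : ℕ) (hk : 1 ≤ k) (hcard : Fintype.card F = 2 ^ (2 * k - 1))
    (d : F) (hd : ∃ x : F, fD k x = d) :
    #(univ.filter fun y : F => fD k y = d) = 2 := by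
  have hK0 : 2 ^ k ≠ 0 := by positivity
  obtain ⟨y0, hy0⟩ := hd
  rcases eq_or_ne d 0 with rfl | hd0
  · have hset : (univ.filter fun y : F => fD k y = 0) = {0, 1} := by
      ext y
      simp only [mem_filter, mem_univ, true_and, mem_insert, mem_singleton]
      constructor
      · intro h
        have hm := ymul k hk y
        rw [h, mul_zero] at hm
        have hfac : y ^ 2 ^ k * (1 + y) = 0 := by linear_combination -hm
        rcases mul_eq_zero.mp hfac with h' | h'
        · left; exact pow_eq_zero_iff hK0 |>.mp h'
        · right; exact (eq_of_add_eq_zero h').symm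
      · rintro (rfl | rfl)
        exacts [fD_zero k hk, fD_one k]
    rw [hset, card_insert_of_notMem (by simp), card_singleton]
  · have hd1 : d ≠ 1 := fun h => one_not_image k hk hcard y0 (h ▸ hy0)
    obtain ⟨hp, hne⟩ := fiber_partner k hk hcard hd0 hd1 hy0
    have hset : (univ.filter fun y : F => fD k y = d) = {y0, y0 + (1 + d)⁻¹} := by
      ext z
      simp only [mem_filter, mem_univ, true_and, mem_insert, mem_singleton]
      constructor
      · intro h
        exact fiber_unique k hk hcard hd0 hd1 h hy0
      · rintro (rfl | rfl)
        exacts [hy0, hp]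
    rw [hset, card_insert_of_notMem (by simpa [eq_comm] using hne), card_singleton]

lemma card_image_fD (k : ℕ) (hk : 1 ≤ k) (hcard : Fintype.card F = 2 ^ (2 * k - 1)) :
    #(univ.image (fD k (F := F))) = 2 ^ (2 * k - 2) := by
  have h := two_to_one_card (fD k) (fun a ha => fiber_card k hk hcard a (by
    simp only [mem_image, mem_univ, true_and] at ha; exact ha))
  rw [hcard] at h
  have e : 2 ^ (2 * k - 1) = 2 * 2 ^ (2 * k - 2) := by
    rw [← pow_succ']; congr 1; omega
  omega

/-- the index two subgroup -/
def S2 (F : Type*) [Field F] [Fintype F] [DecidableEq F] : Finset F :=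
  univ.image (fun z : F => z + z ^ 2)

lemma S2_basic (z : F) : z + z ^ 2 ∈ S2 F := mem_image_of_mem _ (mem_univ z)

lemma S2_zero : (0 : F) ∈ S2 F := by
  have := S2_basic (0 : F); simpa using this

lemma S2_add {a b : F} (ha : a ∈ S2 F) (hb : b ∈ S2 F) : a + b ∈ S2 F := by
  simp only [S2, mem_image, mem_univ, true_and] at ha hb ⊢
  obtain ⟨x, rfl⟩ := ha
  obtain ⟨y, rfl⟩ := hb
  exact ⟨x + y, by rw [CharTwo.add_sq]; ring⟩

lemma S2_sq_iff {a : F} : a ^ 2 ∈ S2 F ↔ a ∈ S2 F := by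
  simp only [S2, mem_image, mem_univ, true_and]
  constructor
  · rintro ⟨x, hx⟩
    obtain ⟨c, rfl⟩ := sq_surj x
    refine ⟨c, sq_inj ?_⟩
    simp only
    rw [CharTwo.add_sq, ← hx]
  · rintro ⟨x, rfl⟩
    exact ⟨x ^ 2, by rw [CharTwo.add_sq]⟩

lemma mem_S2_add_iff {a x : F} (ha : a ∈ S2 F) : x + a ∈ S2 F ↔ x ∈ S2 F := by
  constructor
  · intro h
    have := S2_add h ha
    have e : x + a + a = x := by rw [add_assoc, CharTwo.add_self_eq_zero, add_zero]
    rwa [e] at this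
  · intro h; exact S2_add h ha

lemma one_not_S2 (k : ℕ) (hk : 1 ≤ k) (hcard : Fintype.card F = 2 ^ (2 * k - 1)) :
    (1 : F) ∉ S2 F := by
  intro h
  simp only [S2, mem_image, mem_univ, true_and] at h
  obtain ⟨z, hz⟩ := h
  have hsq : z ^ 2 = z + 1 := by linear_combination hz - z * (h2 (F := F))
  have orbit : ∀ j, z ^ 2 ^ (2 * j + 1) = z + 1 := by
    intro j
    induction j with
    | zero => simpa using hsq
    | succ j ih =>
      have e : 2 ^ (2 * (j + 1) + 1) = 2 ^ (2 * j + 1) * 2 ^ 2 := by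
        have e' : 2 * (j + 1) + 1 = (2 * j + 1) + 2 := by ring
        rw [e', pow_add]
      rw [e, pow_mul, ih]
      have e2 : (z + 1 : F) ^ 2 = z := by
        rw [CharTwo.add_sq, one_pow, hsq, add_assoc, CharTwo.add_self_eq_zero, add_zero]
      calc ((z + 1 : F)) ^ 2 ^ 2 = ((z + 1) ^ 2) ^ 2 := by
              rw [show (2 ^ 2 : ℕ) = 2 * 2 from rfl, pow_mul]
        _ = z ^ 2 := by rw [e2]
        _ = z + 1 := hsq
  have hfin := orbit (k - 1)
  have e3 : 2 * (k - 1) + 1 = 2 * k - 1 := by omega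
  rw [e3, pow_q k hcard] at hfin
  have : (1 : F) = 0 := by linear_combination -hfin
  exact one_ne_zero this

lemma psi_ker (k : ℕ) (hk : 2 ≤ k) (hcard : Fintype.card F = 2 ^ (2 * k - 1))
    {v : F} (h : v ^ 2 ^ k + v ^ 2 = 0) : v = 0 ∨ v = 1 := by
  have h1 : v ^ 2 ^ k = v ^ 2 := eq_of_add_eq_zero h
  have e : 2 ^ k = 2 ^ (k - 1) * 2 := by rw [← pow_succ]; congr 1; omega
  rw [e, pow_mul] at h1
  have h3 : v ^ 2 ^ (k - 1) = v := sq_inj h1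
  have h4 := frob_fix k hk hcard h3
  have h5 : v * (v + 1) = 0 := by linear_combination h4 + v * (h2 (F := F))
  rcases mul_eq_zero.mp h5 with h' | h'
  · exact Or.inl h'
  · exact Or.inr (eq_of_add_eq_zero h')

lemma psi_mem_S2 (k : ℕ) (v : F) : v ^ 2 ^ k + v ^ 2 ∈ S2 F := by
  have key : ∀ j, ∀ v : F, v ^ 2 ^ j + v ∈ S2 F := by
    intro j
    induction j with
    | zero => intro v; rw [pow_zero, pow_one, CharTwo.add_self_eq_zero]; exact S2_zero
    | succ j ih =>
      intro v
      have hA : (v ^ 2 ^ j + v) ^ 2 = v ^ (2 ^ j * 2) + v ^ 2 := by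
        rw [CharTwo.add_sq, ← pow_mul]
      have e : v ^ 2 ^ (j + 1) + v
          = (v ^ 2 ^ j + v) ^ 2 + (v + v ^ 2) := by
        rw [hA, pow_succ]
        linear_combination (-(v ^ 2)) * (h2 (F := F))
      rw [e]
      exact S2_add (S2_sq_iff.mpr (ih v)) (S2_basic v)
  have e2 : v ^ 2 ^ k + v ^ 2 = (v ^ 2 ^ k + v) + (v + v ^ 2) := by
    rw [← add_assoc, add_assoc (v ^ 2 ^ k), CharTwo.add_self_eq_zero, add_zero]
  rw [e2]
  exact S2_add (key k v) (S2_basic v)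

lemma psi_fiber_card (k : ℕ) (hk : 2 ≤ k) (hcard : Fintype.card F = 2 ^ (2 * k - 1))
    (c : F) (hc : ∃ v : F, v ^ 2 ^ k + v ^ 2 = c) :
    #(univ.filter fun v : F => v ^ 2 ^ k + v ^ 2 = c) = 2 := by
  obtain ⟨v0, hv0⟩ := hc
  have hset : (univ.filter fun v : F => v ^ 2 ^ k + v ^ 2 = c) = {v0, v0 + 1} := by
    ext v
    simp only [mem_filter, mem_univ, true_and, mem_insert, mem_singleton]
    constructor
    · intro h
      have hker : (v + v0) ^ 2 ^ k + (v + v0) ^ 2 = 0 := by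
        rw [sigK_add, CharTwo.add_sq]
        linear_combination h - hv0 + (v0 ^ 2 ^ k + v0 ^ 2) * (h2 (F := F))
      rcases psi_ker k hk hcard hker with h' | h'
      · left; exact eq_of_add_eq_zero (by linear_combination h')
      · right
        linear_combination h' - v0 * (h2 (F := F))
    · rintro (rfl | rfl)
      · exact hv0
      · rw [sigK_add, CharTwo.add_sq, one_pow, one_pow]
        linear_combination hv0 + (h2 (F := F))
  rw [hset, card_insert_of_notMem (by simp [CharTwo.add_self_eq_zero]), card_singleton]

lemma psi_image_eq (k : ℕ) (hk : 2 ≤ k) (hcard : Fintype.card F = 2 ^ (2 * k - 1)) :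
    univ.image (fun v : F => v ^ 2 ^ k + v ^ 2) = S2 F := by
  apply Finset.eq_of_subset_of_card_le
  · intro a ha
    simp only [mem_image, mem_univ, true_and] at ha
    obtain ⟨v, rfl⟩ := ha
    exact psi_mem_S2 k v
  · -- #(S2 F) ≤ #(image psi)
    have h1 := two_to_one_card (F := F) (fun v => v ^ 2 ^ k + v ^ 2) (fun a ha => by
      apply psi_fiber_card k hk hcard
      simpa only [mem_image, mem_univ, true_and] using ha)
    have h2' := two_to_one_card (F := F) (fun z => z + z ^ 2) (fun a ha => by
      simp only [mem_image, mem_univ, true_and] at ha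
      obtain ⟨z0, hz0⟩ := ha
      have hset : (univ.filter fun z : F => z + z ^ 2 = a) = {z0, z0 + 1} := by
        ext z
        simp only [mem_filter, mem_univ, true_and, mem_insert, mem_singleton]
        constructor
        · intro h
          have hker : (z + z0) * ((z + z0) + 1) = 0 := by
            linear_combination h - hz0 + (z * z0 + z0 ^ 2 + z0) * (h2 (F := F))
          rcases mul_eq_zero.mp hker with h' | h'
          · left; exact eq_of_add_eq_zero h'
          · right
            have h'' : z + z0 = 1 := eq_of_add_eq_zero h'
            linear_combination h'' - z0 * (h2 (F := F))
        · rintro (rfl | rfl)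
          · exact hz0
          · rw [CharTwo.add_sq, one_pow]
            linear_combination hz0 + (h2 (F := F))
      rw [hset, card_insert_of_notMem (by simp [CharTwo.add_self_eq_zero]), card_singleton])
    unfold S2
    omega

lemma S2_card (k : ℕ) (hk : 2 ≤ k) (hcard : Fintype.card F = 2 ^ (2 * k - 1)) :
    #(S2 F) = 2 ^ (2 * k - 2) := by
  rw [← psi_image_eq k hk hcard]
  have h1 := two_to_one_card (F := F) (fun v => v ^ 2 ^ k + v ^ 2) (fun a ha => by
    apply psi_fiber_card k hk hcard
    simpa only [mem_image, mem_univ, true_and] using ha)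
  rw [hcard] at h1
  have e : 2 ^ (2 * k - 1) = 2 * 2 ^ (2 * k - 2) := by
    rw [← pow_succ']; congr 1; omega
  omega

/-- companion function with linearizable differences -/
def gD (k : ℕ) (w : F) : F := w + w ^ 2 * w ^ 2 ^ k

lemma nat_sq (k : ℕ) : 2 ^ k * 2 ^ k = 2 ^ (2 * k) := by
  rw [← pow_add]; congr 1; omega

lemma fg (k : ℕ) (hk : 1 ≤ k) (hcard : Fintype.card F = 2 ^ (2 * k - 1)) (x : F) :
    fD k x = gD k (x ^ (2 ^ k - 1)) := by
  have hK2 : 2 ≤ 2 ^ k := by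
    calc 2 = 2 ^ 1 := rfl
    _ ≤ 2 ^ k := Nat.pow_le_pow_right (by norm_num) hk
  have hKK := nat_sq k
  have e : (2 ^ k - 1) * 2 + (2 ^ k - 1) * 2 ^ k = 2 ^ (2 * k) + (2 ^ k - 2) := by
    obtain ⟨m, hm⟩ : ∃ m, 2 ^ k = m + 2 := ⟨2 ^ k - 2, by omega⟩
    rw [← hKK, hm, show m + 2 - 1 = m + 1 from by omega, show m + 2 - 2 = m from by omega]
    ring
  unfold fD gD
  rw [← pow_mul, ← pow_mul, ← pow_add, e, pow_add, pow_qq k hk hcard, ← pow_add]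
  congr 2
  omega

lemma beta_nat (k : ℕ) (hk : 1 ≤ k) :
    (2 ^ k - 1) * (2 ^ k + 1) = 1 + 2 * (2 ^ (2 * k - 1) - 1) := by
  have hKK := nat_sq k
  have hq2 : 2 * 2 ^ (2 * k - 1) = 2 ^ (2 * k) := by
    rw [← pow_succ']; congr 1; omega
  have hK2 : 2 ≤ 2 ^ k := by
    calc 2 = 2 ^ 1 := rfl
    _ ≤ 2 ^ k := Nat.pow_le_pow_right (by norm_num) hk
  have h1 : 1 ≤ 2 ^ (2 * k - 1) := Nat.one_le_two_pow
  have hx : (2 ^ k - 1) * (2 ^ k + 1) + 1 = 2 ^ k * 2 ^ k := by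
    obtain ⟨m, hm⟩ : ∃ m, 2 ^ k = m + 2 := ⟨2 ^ k - 2, by omega⟩
    rw [hm, show m + 2 - 1 = m + 1 from by omega, show m + 2 + 1 = m + 3 from by omega]
    have : (m + 1) * (m + 3) + 1 = (m + 2) * (m + 2) := by ring
    omega
  omega

lemma beta_id1 (k : ℕ) (hk : 1 ≤ k) (hcard : Fintype.card F = 2 ^ (2 * k - 1)) (x : F) :
    (x ^ (2 ^ k - 1)) ^ (2 ^ k + 1) = x := by
  rw [← pow_mul, beta_nat k hk, pow_one_add k 2 hcard]

lemma beta_id2 (k : ℕ) (hk : 1 ≤ k) (hcard : Fintype.card F = 2 ^ (2 * k - 1)) (x : F) :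
    (x ^ (2 ^ k + 1)) ^ (2 ^ k - 1) = x := by
  rw [← pow_mul, mul_comm, beta_nat k hk, pow_one_add k 2 hcard]

lemma diff_identity (k : ℕ) (w u : F) :
    gD k (w + u) + gD k w
      = u ^ 2 * w ^ 2 ^ k + u ^ 2 ^ k * w ^ 2 + (u + u ^ 2 * u ^ 2 ^ k) := by
  unfold gD
  rw [sigK_add, CharTwo.add_sq]
  linear_combination (w + w ^ 2 * w ^ 2 ^ k) * (h2 (F := F))

lemma psi_count (k : ℕ) (hk : 2 ≤ k) (hcard : Fintype.card F = 2 ^ (2 * k - 1)) (c : F) :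
    #(univ.filter fun v : F => v ^ 2 ^ k + v ^ 2 = c)
      = if c ∈ S2 F then 2 else 0 := by
  split_ifs with hc
  · rw [← psi_image_eq k hk hcard] at hc
    simp only [mem_image, mem_univ, true_and] at hc
    exact psi_fiber_card k hk hcard c hc
  · rw [Finset.card_eq_zero, Finset.filter_eq_empty_iff]
    intro v _
    intro hv
    exact hc (hv ▸ psi_mem_S2 k v)

lemma Mw_count (k : ℕ) (hk : 2 ≤ k) (hcard : Fintype.card F = 2 ^ (2 * k - 1))
    (b : F) (hb : b ≠ 0) (u : F) :
    #(univ.filter fun w : F => gD k (w + u) + gD k w = b)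
      = if u ≠ 0 ∧ (b + u + u ^ 2 * u ^ 2 ^ k) * (u ^ 2 * u ^ 2 ^ k)⁻¹ ∈ S2 F
        then 2 else 0 := by
  have hK0 : (2 : ℕ) ^ k ≠ 0 := by positivity
  rcases eq_or_ne u 0 with rfl | hu
  · simp only [ne_eq, not_true_eq_false, false_and, if_false]
    rw [Finset.card_eq_zero, Finset.filter_eq_empty_iff]
    intro w _
    rw [diff_identity]
    intro hcontra
    apply hb
    rw [← hcontra]
    rw [zero_pow (by norm_num), zero_pow hK0]
    ring
  · -- u ≠ 0
    have hu2 : u ^ 2 * u ^ 2 ^ k ≠ 0 := mul_ne_zero (pow_ne_zero _ hu) (pow_ne_zero _ hu)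
    -- rewrite the condition
    have hfe : (univ.filter fun w : F => gD k (w + u) + gD k w = b)
        = univ.filter fun w : F =>
            (w * u⁻¹) ^ 2 ^ k + (w * u⁻¹) ^ 2 = (b + u + u ^ 2 * u ^ 2 ^ k) * (u ^ 2 * u ^ 2 ^ k)⁻¹ := by
      apply Finset.filter_congr
      intro w _
      rw [diff_identity]
      have key : ∀ cu : F, (u ^ 2 * w ^ 2 ^ k + u ^ 2 ^ k * w ^ 2 = cu)
          ↔ ((w * u⁻¹) ^ 2 ^ k + (w * u⁻¹) ^ 2 = cu * (u ^ 2 * u ^ 2 ^ k)⁻¹) := by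
        intro cu
        have hiden : (w * u⁻¹) ^ 2 ^ k + (w * u⁻¹) ^ 2
            = (u ^ 2 * w ^ 2 ^ k + u ^ 2 ^ k * w ^ 2) * (u ^ 2 * u ^ 2 ^ k)⁻¹ := by
          field_simp
          have eK : (u * u⁻¹) ^ 2 ^ k = 1 := by rw [mul_inv_cancel₀ hu, one_pow]
          linear_combination (u ^ 2 * w ^ 2 ^ k) * eK
        rw [hiden]
        constructor
        · intro h; rw [h]
        · intro h
          exact mul_right_cancel₀ (inv_ne_zero hu2) h
      constructor
      · intro h
        exact (key (b + u + u ^ 2 * u ^ 2 ^ k)).mp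
          (by linear_combination h - (u + u ^ 2 * u ^ 2 ^ k) * (h2 (F := F)))
      · intro h
        have := (key (b + u + u ^ 2 * u ^ 2 ^ k)).mpr h
        linear_combination this + (u + u ^ 2 * u ^ 2 ^ k) * (h2 (F := F))
    rw [hfe]
    have hbij : #(univ.filter fun w : F =>
            (w * u⁻¹) ^ 2 ^ k + (w * u⁻¹) ^ 2 = (b + u + u ^ 2 * u ^ 2 ^ k) * (u ^ 2 * u ^ 2 ^ k)⁻¹)
        = #(univ.filter fun v : F =>
            v ^ 2 ^ k + v ^ 2 = (b + u + u ^ 2 * u ^ 2 ^ k) * (u ^ 2 * u ^ 2 ^ k)⁻¹) := by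
      apply Finset.card_nbij (i := fun w => w * u⁻¹)
      · intro w hw
        simp only [mem_coe, mem_filter, mem_univ, true_and] at hw ⊢
        exact hw
      · intro w1 h1 w2 h2' hw
        simpa [hu] using mul_right_cancel₀ (inv_ne_zero hu) hw
      · intro v hv
        simp only [Finset.coe_filter, Set.mem_setOf_eq, mem_univ, true_and] at hv ⊢
        refine ⟨v * u, ?_, ?_⟩
        · simpa [mul_assoc, mul_inv_cancel₀ hu] using hv
        · simp [mul_assoc, mul_inv_cancel₀ hu]
    rw [hbij, psi_count k hk hcard]
    simp [hu]

lemma sqrt_id1 (k : ℕ) (hk : 1 ≤ k) (hcard : Fintype.card F = 2 ^ (2 * k - 1)) (x : F) :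
    (x ^ 2 ^ (2 * k - 2)) ^ 2 = x := by
  rw [← pow_mul, ← pow_succ, show 2 * k - 2 + 1 = 2 * k - 1 from by omega, pow_q k hcard]

lemma sqrt_id2 (k : ℕ) (hk : 1 ≤ k) (hcard : Fintype.card F = 2 ^ (2 * k - 1)) (x : F) :
    (x ^ 2) ^ 2 ^ (2 * k - 2) = x := by
  rw [pow_right_comm]
  exact sqrt_id1 k hk hcard x

lemma M_nat (k : ℕ) (hk : 1 ≤ k) :
    (2 ^ (k - 1) + 1) * (2 ^ k * (2 ^ k - 1)) = 1 + (2 ^ k + 1) * (2 ^ (2 * k - 1) - 1) := by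
  have e1 : 2 ^ k = 2 ^ (k - 1) * 2 := by rw [← pow_succ]; congr 1; omega
  have e2 : 2 ^ (2 * k - 1) = 2 ^ (k - 1) * 2 ^ k := by rw [← pow_add]; congr 1; omega
  have hpos : 1 ≤ 2 ^ (k - 1) := Nat.one_le_two_pow
  obtain ⟨m, hm⟩ : ∃ m, 2 ^ (k - 1) = m + 1 := ⟨2 ^ (k - 1) - 1, by omega⟩
  rw [e2, e1, hm]
  rw [show (m + 1) * 2 - 1 = 2 * m + 1 from by omega]
  rw [show (m + 1) * ((m + 1) * 2) = 2 * m ^ 2 + 4 * m + 2 from by ring]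
  rw [show 2 * m ^ 2 + 4 * m + 2 - 1 = 2 * m ^ 2 + 4 * m + 1 from by omega]
  ring

lemma Mmap_id1 (k : ℕ) (hk : 1 ≤ k) (hcard : Fintype.card F = 2 ^ (2 * k - 1)) (x : F) :
    (x ^ (2 ^ (k - 1) + 1)) ^ (2 ^ k * (2 ^ k - 1)) = x := by
  rw [← pow_mul, M_nat k hk, pow_one_add k (2 ^ k + 1) hcard]

lemma Mmap_id2 (k : ℕ) (hk : 1 ≤ k) (hcard : Fintype.card F = 2 ^ (2 * k - 1)) (x : F) :
    (x ^ (2 ^ k * (2 ^ k - 1))) ^ (2 ^ (k - 1) + 1) = x := by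
  rw [← pow_mul, mul_comm, M_nat k hk, pow_one_add k (2 ^ k + 1) hcard]

/-- the substitution u ↦ z -/
def iMap (k : ℕ) (u : F) : F := ((u⁻¹) ^ 2 ^ (2 * k - 2)) ^ (2 ^ (k - 1) + 1)

/-- its inverse -/
def rMap (k : ℕ) (z : F) : F := (((z ^ (2 ^ k * (2 ^ k - 1))) ^ 2)⁻¹)

lemma iMap_left_inv (k : ℕ) (hk : 1 ≤ k) (hcard : Fintype.card F = 2 ^ (2 * k - 1)) (u : F) :
    rMap k (iMap k u) = u := by
  unfold rMap iMap
  rw [Mmap_id1 k hk hcard, sqrt_id1 k hk hcard, inv_inv]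

lemma iMap_right_inv (k : ℕ) (hk : 1 ≤ k) (hcard : Fintype.card F = 2 ^ (2 * k - 1)) (z : F) :
    iMap k (rMap k z) = z := by
  unfold rMap iMap
  rw [inv_inv, sqrt_id2 k hk hcard, Mmap_id2 k hk hcard]

lemma iMap_ne_zero (k : ℕ) {u : F} (hu : u ≠ 0) : iMap k u ≠ 0 :=
  pow_ne_zero _ (pow_ne_zero _ (inv_ne_zero hu))

lemma cond_equiv (k : ℕ) (hk : 2 ≤ k) (hcard : Fintype.card F = 2 ^ (2 * k - 1))
    (b : F) {u : F} (hu : u ≠ 0) :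
    (b + u + u ^ 2 * u ^ 2 ^ k) * (u ^ 2 * u ^ 2 ^ k)⁻¹ ∈ S2 F ↔
      b ^ 2 ^ (2 * k - 2) * (iMap k u) ^ 2 + iMap k u + 1 ∈ S2 F := by
  have hk1 : 1 ≤ k := by omega
  set t : F := (u⁻¹) ^ 2 ^ (2 * k - 2) with ht
  have ht0 : t ≠ 0 := pow_ne_zero _ (inv_ne_zero hu)
  have htu : t ^ 2 = u⁻¹ := sqrt_id1 k hk1 hcard u⁻¹
  have hut : u = (t ^ 2)⁻¹ := by rw [htu, inv_inv]
  set β : F := b ^ 2 ^ (2 * k - 2) with hβ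
  set z : F := iMap k u with hz
  have hzt : z = t ^ (2 ^ (k - 1) + 1) := rfl
  set v : F := (t ^ 2 ^ (2 * k - 2)) ^ (2 ^ k + 1) with hv
  have f6 : β ^ 2 = b := sqrt_id1 k hk1 hcard b
  have f1 : z ^ 2 = t ^ (2 ^ k + 2) := by
    rw [hzt, ← pow_mul]
    congr 1
    have e' : 2 ^ k = 2 ^ (k - 1) * 2 := by rw [← pow_succ]; congr 1; omega
    omega
  have f2 : (z ^ 2) ^ 2 = t ^ (2 * 2 ^ k + 4) := by
    rw [f1, ← pow_mul]
    congr 1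
    ring
  have f3 : v ^ 2 = t ^ (2 ^ k + 1) := by
    rw [hv, pow_right_comm, sqrt_id1 k hk1 hcard]
  have f4 : (v ^ 2) ^ 2 = t ^ (2 * 2 ^ k + 2) := by
    rw [f3, ← pow_mul]
    congr 1
    ring
  have f5 : (v ^ 2) ^ 2 ^ k = t ^ (2 ^ k + 2) := by
    rw [f3, ← pow_mul]
    have e : (2 ^ k + 1) * 2 ^ k = 2 ^ (2 * k) + 2 ^ k := by
      rw [add_mul, one_mul, nat_sq]
    rw [e, pow_add, pow_qq k hk1 hcard, ← pow_add]
    congr 1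
    omega
  have cube : ∀ a b c d : F, (a + b + c + d) ^ 2 = a ^ 2 + b ^ 2 + c ^ 2 + d ^ 2 := by
    intro a b c d
    rw [CharTwo.add_sq, CharTwo.add_sq, CharTwo.add_sq]
  have hvsq : (v ^ 2 ^ k + v ^ 2) ^ 2 = t ^ (2 ^ k + 2) + t ^ (2 * 2 ^ k + 2) := by
    rw [CharTwo.add_sq]
    have hsw : (v ^ 2 ^ k) ^ 2 = (v ^ 2) ^ 2 ^ k := pow_right_comm v (2 ^ k) 2
    rw [hsw, f5, f4]
  have key4 : (β * z ^ 2 + z + 1 + (v ^ 2 ^ k + v ^ 2)) ^ 2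
      = b * t ^ (2 * 2 ^ k + 4) + t ^ (2 * 2 ^ k + 2) + 1 := by
    rw [cube, mul_pow, f6, f2, f1, hvsq, one_pow]
    linear_combination (t ^ (2 ^ k + 2)) * (h2 (F := F))
  have epow : u ^ 2 * u ^ 2 ^ k = u ^ (2 ^ k + 2) := by
    rw [← pow_add]; congr 1; omega
  have key1 : u * t ^ (2 * 2 ^ k + 4) = t ^ (2 * 2 ^ k + 2) := by
    rw [hut, show (2 * 2 ^ k + 4) = 2 + (2 * 2 ^ k + 2) from by omega, pow_add,
      ← mul_assoc, inv_mul_cancel₀ (pow_ne_zero 2 ht0), one_mul]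
  have key2 : u ^ (2 ^ k + 2) * t ^ (2 * 2 ^ k + 4) = 1 := by
    rw [hut, inv_pow, ← pow_mul,
      show 2 * (2 ^ k + 2) = 2 * 2 ^ k + 4 from by ring,
      inv_mul_cancel₀ (pow_ne_zero _ ht0)]
  have key3 : (u ^ 2 * u ^ 2 ^ k)⁻¹ = t ^ (2 * 2 ^ k + 4) := by
    rw [epow]
    exact inv_eq_of_mul_eq_one_right key2
  have final : (b + u + u ^ 2 * u ^ 2 ^ k) * (u ^ 2 * u ^ 2 ^ k)⁻¹
      = (β * z ^ 2 + z + 1 + (v ^ 2 ^ k + v ^ 2)) ^ 2 := by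
    rw [key4, key3, add_mul, add_mul, key1, epow, key2]
  rw [final]
  exact (S2_sq_iff).trans (mem_S2_add_iff (psi_mem_S2 k v))

lemma pairs_fg (k : ℕ) (hk : 1 ≤ k) (hcard : Fintype.card F = 2 ^ (2 * k - 1)) (b : F) :
    #(univ.filter fun p : F × F => fD k p.1 + fD k p.2 = b)
      = #(univ.filter fun p : F × F => gD k p.1 + gD k p.2 = b) := by
  apply card_nbij (i := fun p : F × F => (p.1 ^ (2 ^ k - 1), p.2 ^ (2 ^ k - 1)))
  · intro p hp
    simp only [mem_coe, mem_filter, mem_univ, true_and] at hp ⊢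
    rw [← fg k hk hcard, ← fg k hk hcard]
    exact hp
  · intro p hp q hq hpq
    simp only [Prod.mk.injEq] at hpq
    obtain ⟨h1, h2'⟩ := hpq
    have e1 := congrArg (fun y : F => y ^ (2 ^ k + 1)) h1
    have e2 := congrArg (fun y : F => y ^ (2 ^ k + 1)) h2'
    simp only [beta_id1 k hk hcard] at e1 e2
    exact Prod.ext e1 e2
  · intro p hp
    simp only [Finset.coe_filter, Set.mem_setOf_eq, mem_univ, true_and] at hp ⊢
    refine ⟨(p.1 ^ (2 ^ k + 1), p.2 ^ (2 ^ k + 1)), ?_, ?_⟩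
    · show fD k (p.1 ^ (2 ^ k + 1)) + fD k (p.2 ^ (2 ^ k + 1)) = b
      rw [fg k hk hcard, fg k hk hcard, beta_id2 k hk hcard, beta_id2 k hk hcard]
      exact hp
    · show ((p.1 ^ (2 ^ k + 1)) ^ (2 ^ k - 1), (p.2 ^ (2 ^ k + 1)) ^ (2 ^ k - 1)) = p
      rw [beta_id2 k hk hcard, beta_id2 k hk hcard]

lemma pairs_sum (k : ℕ) (b : F) :
    #(univ.filter fun p : F × F => gD k p.1 + gD k p.2 = b)
      = ∑ u : F, #(univ.filter fun w : F => gD k (w + u) + gD k w = b) := by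
  rw [Finset.card_eq_sum_card_fiberwise
    (f := fun p : F × F => p.1 + p.2) (t := univ) (fun _ _ => mem_univ _)]
  apply Finset.sum_congr rfl
  intro u _
  symm
  apply card_nbij (i := fun w : F => (w + u, w))
  · intro w hw
    simp only [mem_coe, mem_filter, mem_univ, true_and] at hw ⊢
    refine ⟨hw, ?_⟩
    rw [add_comm w u, add_assoc, CharTwo.add_self_eq_zero, add_zero]
  · intro w1 h1 w2 h2' hw
    simpa using congrArg Prod.snd hw
  · intro p hp
    simp only [Finset.coe_filter, Set.mem_setOf_eq, mem_univ, true_and, mem_filter] at hp ⊢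
    obtain ⟨hb, hu⟩ := hp
    have e : p.2 + u = p.1 := by
      rw [← hu, add_comm p.1 p.2, ← add_assoc, CharTwo.add_self_eq_zero, zero_add]
    refine ⟨p.2, ?_, ?_⟩
    · show gD k (p.2 + u) + gD k p.2 = b
      rw [e]
      exact hb
    · show (p.2 + u, p.2) = p
      rw [e]

lemma Npair_eval (k : ℕ) (hk : 2 ≤ k) (hcard : Fintype.card F = 2 ^ (2 * k - 1))
    (b : F) (hb : b ≠ 0) :
    #(univ.filter fun p : F × F => fD k p.1 + fD k p.2 = b)
      = 2 * #(univ.filter fun z : F =>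
          z ≠ 0 ∧ b ^ 2 ^ (2 * k - 2) * z ^ 2 + z + 1 ∈ S2 F) := by
  have hk1 : 1 ≤ k := by omega
  rw [pairs_fg k hk1 hcard b, pairs_sum k b]
  rw [Finset.sum_congr rfl (fun u _ => Mw_count k hk hcard b hb u)]
  rw [Finset.sum_ite, Finset.sum_const, Finset.sum_const, smul_eq_mul, smul_eq_mul,
    mul_zero, add_zero, mul_comm]
  congr 1
  apply card_nbij (i := iMap k)
  · intro u hu
    simp only [mem_coe, mem_filter, mem_univ, true_and] at hu ⊢
    obtain ⟨hu0, hcond⟩ := hu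
    exact ⟨iMap_ne_zero k hu0, (cond_equiv k hk hcard b hu0).mp hcond⟩
  · intro u1 h1 u2 h2' hu
    have e1 := congrArg (rMap k) hu
    rwa [iMap_left_inv k hk1 hcard, iMap_left_inv k hk1 hcard] at e1
  · intro z hz
    simp only [Finset.coe_filter, Set.mem_setOf_eq, mem_univ, true_and] at hz ⊢
    obtain ⟨hz0, hcond⟩ := hz
    have hrz : rMap k z ≠ 0 := inv_ne_zero (pow_ne_zero _ (pow_ne_zero _ hz0))
    refine ⟨rMap k z, ⟨hrz, ?_⟩, iMap_right_inv k hk1 hcard z⟩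
    rw [cond_equiv k hk hcard b hrz, iMap_right_inv k hk1 hcard z]
    exact hcond

lemma Z_eval_one (k : ℕ) (hk : 2 ≤ k) (hcard : Fintype.card F = 2 ^ (2 * k - 1)) :
    #(univ.filter fun z : F =>
        z ≠ 0 ∧ (1 : F) ^ 2 ^ (2 * k - 2) * z ^ 2 + z + 1 ∈ S2 F) = 0 := by
  rw [Finset.card_eq_zero, Finset.filter_eq_empty_iff]
  rintro z - ⟨hz0, hmem⟩
  rw [one_pow, one_mul] at hmem
  have e : z ^ 2 + z + 1 = 1 + (z + z ^ 2) := by ring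
  rw [e, mem_S2_add_iff (S2_basic z)] at hmem
  exact one_not_S2 k (by omega) hcard hmem

lemma Z_eval_gen (k : ℕ) (hk : 2 ≤ k) (hcard : Fintype.card F = 2 ^ (2 * k - 1))
    {b : F} (hb0 : b ≠ 0) (hb1 : b ≠ 1) :
    #(univ.filter fun z : F =>
        z ≠ 0 ∧ b ^ 2 ^ (2 * k - 2) * z ^ 2 + z + 1 ∈ S2 F) = 2 ^ (2 * k - 2) := by
  have hk1 : 1 ≤ k := by omega
  set β : F := b ^ 2 ^ (2 * k - 2) with hβ
  have hβsq : β ^ 2 = b := sqrt_id1 k hk1 hcard b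
  have hβ0 : β ≠ 0 := fun h => hb0 (by rw [← hβsq, h]; norm_num)
  have hβ1 : β ≠ 1 := fun h => hb1 (by rw [← hβsq, h, one_pow])
  have hγ : β + 1 ≠ 0 := fun h => hβ1 (eq_of_add_eq_zero h)
  have hcond : ∀ z : F, (β * z ^ 2 + z + 1 ∈ S2 F) ↔ ((β + 1) * z ^ 2 + 1 ∈ S2 F) := by
    intro z
    have e : (β + 1) * z ^ 2 + 1 = (β * z ^ 2 + z + 1) + (z + z ^ 2) := by
      linear_combination (-z) * (h2 (F := F))
    rw [e]
    exact (mem_S2_add_iff (S2_basic z)).symm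
  have hdrop : (univ.filter fun z : F => z ≠ 0 ∧ β * z ^ 2 + z + 1 ∈ S2 F)
      = univ.filter fun z : F => (β + 1) * z ^ 2 + 1 ∈ S2 F := by
    ext z
    simp only [mem_filter, mem_univ, true_and]
    constructor
    · rintro ⟨_, hz⟩; exact (hcond z).mp hz
    · intro hz
      refine ⟨?_, (hcond z).mpr hz⟩
      rintro rfl
      rw [zero_pow two_ne_zero, mul_zero, zero_add] at hz
      exact one_not_S2 k (by omega) hcard hz
  rw [hdrop]
  have c1 : #(univ.filter fun z : F => (β + 1) * z ^ 2 + 1 ∈ S2 F)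
      = #(univ.filter fun w : F => w + 1 ∈ S2 F) := by
    apply card_nbij (i := fun z : F => (β + 1) * z ^ 2)
    · intro z hz
      simp only [mem_coe, mem_filter, mem_univ, true_and] at hz ⊢
      exact hz
    · intro z1 h1 z2 h2' hz
      simp only at hz
      exact sq_inj (mul_left_cancel₀ hγ hz)
    · intro w hw
      simp only [Finset.coe_filter, Set.mem_setOf_eq, mem_univ, true_and] at hw ⊢
      obtain ⟨z, hz⟩ := sq_surj ((β + 1)⁻¹ * w)
      simp only at hz
      refine ⟨z, ?_, ?_⟩
      · show (β + 1) * z ^ 2 + 1 ∈ S2 F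
        rw [hz, ← mul_assoc, mul_inv_cancel₀ hγ, one_mul]
        exact hw
      · show (β + 1) * z ^ 2 = w
        rw [hz, ← mul_assoc, mul_inv_cancel₀ hγ, one_mul]
  have c2 : #(univ.filter fun w : F => w + 1 ∈ S2 F) = #(S2 F) := by
    apply card_nbij (i := fun w : F => w + 1)
    · intro w hw
      simp only [mem_coe, mem_filter, mem_univ, true_and] at hw
      exact hw
    · intro w1 h1 w2 h2' hw
      simpa using hw
    · intro a ha
      simp only [Finset.coe_filter, Set.mem_setOf_eq, mem_univ, true_and] at ha ⊢
      refine ⟨a + 1, ?_, ?_⟩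
      · show a + 1 + 1 ∈ S2 F
        rw [add_assoc, CharTwo.add_self_eq_zero, add_zero]
        exact ha
      · show a + 1 + 1 = a
        rw [add_assoc, CharTwo.add_self_eq_zero, add_zero]
  rw [c1, c2, S2_card k hk hcard]

lemma pairs_four (k : ℕ) (hk : 1 ≤ k) (hcard : Fintype.card F = 2 ^ (2 * k - 1))
    (b : F) (hb : b ≠ 0) :
    #(univ.filter fun p : F × F => fD k p.1 + fD k p.2 = b)
      = 4 * #(univ.filter fun d : F =>
          (∃ x : F, fD k x = d) ∧ (∃ x : F, fD k x = d + b)) := by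
  classical
  set t := univ.filter fun d : F =>
    (∃ x : F, fD k x = d) ∧ (∃ x : F, fD k x = d + b) with htdef
  have hmem : ∀ p ∈ univ.filter fun p : F × F => fD k p.1 + fD k p.2 = b,
      fD k p.1 ∈ t := by
    intro p hp
    simp only [mem_filter, mem_univ, true_and] at hp
    simp only [htdef, mem_filter, mem_univ, true_and]
    exact ⟨⟨p.1, rfl⟩, ⟨p.2, by linear_combination hp - (fD k p.1) * (h2 (F := F))⟩⟩
  rw [Finset.card_eq_sum_card_fiberwise hmem]
  have hfib : ∀ d ∈ t,
      #((univ.filter fun p : F × F => fD k p.1 + fD k p.2 = b).filter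
          fun p => fD k p.1 = d) = 4 := by
    intro d hd
    simp only [htdef, mem_filter, mem_univ, true_and] at hd
    obtain ⟨hd1, hd2⟩ := hd
    rw [Finset.filter_filter]
    have hset : (univ.filter fun p : F × F => (fD k p.1 + fD k p.2 = b) ∧ fD k p.1 = d)
        = (univ.filter fun x : F => fD k x = d) ×ˢ (univ.filter fun y : F => fD k y = d + b) := by
      ext p
      simp only [mem_filter, mem_univ, true_and, Finset.mem_product]
      constructor
      · rintro ⟨hpb, hpd⟩
        exact ⟨hpd, by linear_combination hpb - hpd - d * (h2 (F := F))⟩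
      · rintro ⟨hpd, hpb2⟩
        exact ⟨by linear_combination hpd + hpb2 + d * (h2 (F := F)), hpd⟩
    rw [hset, Finset.card_product, fiber_card k hk hcard d hd1,
      fiber_card k hk hcard (d + b) hd2]
  rw [Finset.sum_congr rfl hfib, Finset.sum_const, smul_eq_mul, mul_comm]

lemma Icount_one (k : ℕ) (hk : 2 ≤ k) (hcard : Fintype.card F = 2 ^ (2 * k - 1)) :
    #(univ.filter fun d : F =>
        (∃ x : F, fD k x = d) ∧ (∃ x : F, fD k x = d + 1)) = 0 := by
  have h4 := pairs_four k (by omega) hcard 1 one_ne_zero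
  have hN := Npair_eval k hk hcard 1 one_ne_zero
  rw [Z_eval_one k hk hcard] at hN
  omega

lemma Icount_gen (k : ℕ) (hk : 2 ≤ k) (hcard : Fintype.card F = 2 ^ (2 * k - 1))
    {b : F} (hb0 : b ≠ 0) (hb1 : b ≠ 1) :
    #(univ.filter fun d : F =>
        (∃ x : F, fD k x = d) ∧ (∃ x : F, fD k x = d + b)) = 2 ^ (2 * k - 3) := by
  have h4 := pairs_four k (by omega) hcard b hb0
  have hN := Npair_eval k hk hcard b hb0
  rw [Z_eval_gen k hk hcard hb0 hb1] at hN
  have e1 : 2 ^ (2 * k - 2) = 2 * 2 ^ (2 * k - 3) := by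
    rw [← pow_succ']; congr 1; omega
  omega

lemma pairset_card (k : ℕ) (hk : 1 ≤ k) (hcard : Fintype.card F = 2 ^ (2 * k - 1))
    (g : F) (hg0 : g ≠ 0) :
    #(univ.filter fun p : F × F =>
        (∃ x : F, fD k x = p.1) ∧ (∃ x : F, fD k x = p.2) ∧ p.1 ≠ p.2 ∧ p.1 - p.2 = g)
      = #(univ.filter fun d : F => (∃ x : F, fD k x = d) ∧ (∃ x : F, fD k x = d + g)) := by
  have hsub : ∀ a b : F, a - b = a + b := fun a b => by
    rw [sub_eq_add_neg, CharTwo.neg_eq]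
  apply card_nbij (i := fun p : F × F => p.1)
  · intro p hp
    simp only [mem_coe, mem_filter, mem_univ, true_and] at hp ⊢
    obtain ⟨h1, h2', hne, hs⟩ := hp
    refine ⟨h1, ?_⟩
    rw [hsub] at hs
    have h3 : p.1 + g = p.2 := by
      rw [← hs, ← add_assoc, CharTwo.add_self_eq_zero, zero_add]
    rw [h3]
    exact h2'
  · intro p hp q hq hpq
    simp only [mem_coe, mem_filter, mem_univ, true_and] at hp hq
    obtain ⟨-, -, -, hsp⟩ := hp
    obtain ⟨-, -, -, hsq⟩ := hq
    simp only at hpq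
    apply Prod.ext hpq
    rw [hsub] at hsp hsq
    have h4 := hsp.trans hsq.symm
    rw [hpq] at h4
    exact add_left_cancel h4
  · intro d hd
    simp only [Finset.coe_filter, Set.mem_setOf_eq, mem_univ, true_and] at hd ⊢
    obtain ⟨h1, h2'⟩ := hd
    refine ⟨(d, d + g), ⟨h1, h2', ?_, ?_⟩, rfl⟩
    · intro hcontra
      exact hg0 (left_eq_add.mp hcontra)
    · show d - (d + g) = g
      rw [hsub, ← add_assoc, CharTwo.add_self_eq_zero, zero_add]

end RDS12

theorem stmt_12 {k : ℕ} (hk : 2 ≤ k) (F : Type*) [Field F] [Fintype F]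
    [Algebra (ZMod 2) F] (hcard : Fintype.card F = 2 ^ (2 * k - 1)) :
    IsRelDiffSet {u : F | ∃ x : F, u = x ^ (2 ^ k - 1) + x ^ (2 ^ k)} ({0, 1} : Set F)
      (2 ^ (2 * k - 2)) 2 (2 ^ (2 * k - 2)) (2 ^ (2 * k - 3)) := by
  classical
  haveI : CharP F 2 :=
    charP_of_injective_algebraMap (algebraMap (ZMod 2) F).injective 2
  have hk1 : 1 ≤ k := by omega
  open RDS12 in
  have hDset : {u : F | ∃ x : F, u = x ^ (2 ^ k - 1) + x ^ (2 ^ k)}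
      = ↑(Finset.univ.image (RDS12.fD k (F := F))) := by
    ext u
    simp only [Set.mem_setOf_eq, Finset.coe_image, Finset.coe_univ, Set.image_univ,
      Set.mem_range]
    constructor
    · rintro ⟨x, hx⟩; exact ⟨x, hx.symm⟩
    · rintro ⟨x, hx⟩; exact ⟨x, hx.symm⟩
  have hpairset : ∀ g : F, {p : F × F |
        p.1 ∈ {u : F | ∃ x : F, u = x ^ (2 ^ k - 1) + x ^ (2 ^ k)} ∧
        p.2 ∈ {u : F | ∃ x : F, u = x ^ (2 ^ k - 1) + x ^ (2 ^ k)} ∧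
        p.1 ≠ p.2 ∧ p.1 - p.2 = g}
      = ↑(Finset.univ.filter fun p : F × F =>
        (∃ x : F, RDS12.fD k x = p.1) ∧ (∃ x : F, RDS12.fD k x = p.2) ∧
          p.1 ≠ p.2 ∧ p.1 - p.2 = g) := by
    intro g
    ext p
    simp only [Set.mem_setOf_eq, Finset.coe_filter, Finset.mem_univ, true_and]
    constructor
    · rintro ⟨⟨x1, hx1⟩, ⟨x2, hx2⟩, hne, hs⟩
      exact ⟨⟨x1, hx1.symm⟩, ⟨x2, hx2.symm⟩, hne, hs⟩
    · rintro ⟨⟨x1, hx1⟩, ⟨x2, hx2⟩, hne, hs⟩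
      exact ⟨⟨x1, hx1.symm⟩, ⟨x2, hx2.symm⟩, hne, hs⟩
  refine ⟨?_, ?_, ?_, ?_, ?_⟩
  · rw [Nat.card_eq_fintype_card, hcard, ← pow_succ]
    congr 1
    omega
  · exact Set.ncard_pair zero_ne_one
  · rw [hDset, Set.ncard_coe_finset, RDS12.card_image_fD k hk1 hcard]
  · intro g hg
    simp only [Set.mem_insert_iff, Set.mem_singleton_iff, not_or] at hg
    obtain ⟨hg0, hg1⟩ := hg
    rw [hpairset g, Set.ncard_coe_finset, RDS12.pairset_card k hk1 hcard g hg0,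
      RDS12.Icount_gen k hk hcard hg0 hg1]
  · intro g hg hgne
    have hg1 : g = 1 := by
      rcases hg with h | h
      · exact absurd h hgne
      · exact h
    subst hg1
    rw [hpairset 1, Set.ncard_coe_finset, RDS12.pairset_card k hk1 hcard 1 one_ne_zero,
      RDS12.Icount_one k hk hcard]
end

section
/- Let K and N be finite abelian groups and f : K → N a function. Then the set R = { (g, f(g)) : g ∈ K } ⊆ K × N is a semiregular splitting (|K|, |N|, |K|, |K|/|N|) relative difference set in K × N relative to {0} × N if and only if f is perfect nonlinear, i.e., for every nonzero a ∈ K and every b ∈ N the equation f(x + a) - f(x) = b has exactly |K|/|N| solutions x ∈ K. -/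
private lemma pairset_eq {K N : Type*} [AddCommGroup K] [AddCommGroup N]
    (f : K → N) (a : K) (ha : a ≠ 0) (b : N) :
    {p : (K × N) × (K × N) | p.1 ∈ {p : K × N | p.2 = f p.1} ∧
      p.2 ∈ {p : K × N | p.2 = f p.1} ∧ p.1 ≠ p.2 ∧ p.1 - p.2 = (a, b)} =
    (fun x : K => ((x + a, f (x + a)), (x, f x))) '' {x : K | f (x + a) - f x = b} := by
  ext p
  simp only [Set.mem_setOf_eq, Set.mem_image]
  constructor
  · rintro ⟨h1, h2, hne, hsub⟩
    have hs1 : p.1.1 - p.2.1 = a := congrArg Prod.fst hsub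
    have hs2 : p.1.2 - p.2.2 = b := congrArg Prod.snd hsub
    have h11 : p.1.1 = p.2.1 + a := by rw [← hs1]; abel
    refine ⟨p.2.1, ?_, ?_⟩
    · rw [← h11, ← h1, ← h2, hs2]
    · have e1 : p.1 = (p.2.1 + a, f (p.2.1 + a)) := Prod.ext h11 (by rw [← h11, h1])
      have e2 : p.2 = (p.2.1, f p.2.1) := Prod.ext rfl h2
      exact (Prod.ext e1 e2).symm
  · rintro ⟨x, hx, rfl⟩
    refine ⟨rfl, rfl, ?_, ?_⟩
    · intro h
      have : x + a = x := congrArg Prod.fst h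
      exact ha (by simpa using this)
    · exact Prod.ext (by simp) hx

theorem stmt_15 {K N : Type*} [AddCommGroup K] [Fintype K] [AddCommGroup N] [Fintype N]
    (hdvd : Fintype.card N ∣ Fintype.card K) (f : K → N) :
    IsRelDiffSet {p : K × N | p.2 = f p.1} ({0} ×ˢ (Set.univ : Set N))
      (Fintype.card K) (Fintype.card N) (Fintype.card K)
      (Fintype.card K / Fintype.card N) ↔
    (∀ a : K, a ≠ 0 → ∀ b : N,
      {x : K | f (x + a) - f x = b}.ncard = Fintype.card K / Fintype.card N) := by
  have inj : ∀ a : K, Function.Injective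
      (fun x : K => (((x + a, f (x + a)), (x, f x)) : (K × N) × (K × N))) := by
    intro a x y h
    exact congrArg (fun q => q.2.1) h
  constructor
  · intro h a ha b
    have hmem : ((a, b) : K × N) ∉ ({0} ×ˢ (Set.univ : Set N)) := by
      simp [ha]
    have := h.2.2.2.1 (a, b) hmem
    rw [pairset_eq f a ha b, Set.ncard_image_of_injective _ (inj a)] at this
    exact this
  · intro h
    refine ⟨?_, ?_, ?_, ?_, ?_⟩
    · simp [Nat.card_eq_fintype_card, mul_comm]
    · have e : ({0} ×ˢ (Set.univ : Set N)) = (fun n : N => ((0 : K), n)) '' Set.univ := by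
        ext p
        simp [Prod.ext_iff, eq_comm]
      rw [e, Set.ncard_image_of_injective _ (fun x y hxy => congrArg Prod.snd hxy),
        Set.ncard_univ, Nat.card_eq_fintype_card]
    · have e : {p : K × N | p.2 = f p.1} = (fun x : K => (x, f x)) '' Set.univ := by
        ext p
        simp only [Set.mem_setOf_eq, Set.mem_image, Set.mem_univ, true_and]
        constructor
        · intro hp; exact ⟨p.1, (Prod.ext rfl hp.symm)⟩
        · rintro ⟨x, rfl⟩; rfl
      rw [e, Set.ncard_image_of_injective _ (fun x y hxy => congrArg Prod.fst hxy),
        Set.ncard_univ, Nat.card_eq_fintype_card]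
    · rintro ⟨a, b⟩ hg
      have ha : a ≠ 0 := fun h0 => (by simpa using hg : ¬a = 0) h0
      rw [pairset_eq f a ha b, Set.ncard_image_of_injective _ (inj a)]
      exact h a ha b
    · rintro ⟨a, b⟩ hg hne
      have ha : a = 0 := (by simpa using hg : a = 0)
      subst ha
      have e : {p : (K × N) × (K × N) | p.1 ∈ {p : K × N | p.2 = f p.1} ∧
          p.2 ∈ {p : K × N | p.2 = f p.1} ∧ p.1 ≠ p.2 ∧ p.1 - p.2 = (0, b)} = ∅ := by
        ext p
        simp only [Set.mem_setOf_eq, Set.mem_empty_iff_false, iff_false, not_and]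
        rintro h1 h2 hpne hsub
        have hs1 : p.1.1 - p.2.1 = 0 := congrArg Prod.fst hsub
        have h11 : p.1.1 = p.2.1 := by rwa [sub_eq_zero] at hs1
        exact hpne (Prod.ext h11 (by rw [h1, h2, h11]))
      rw [e, Set.ncard_empty]
end
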